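/- arXiv:2411.02101 — 15 statements merged into one kernel-verified Lean document; each statement's English description precedes it below -/
import Mathlib

section
/- Let R ⊆ S be an extension of commutative rings and I an ideal of S whose elements all lie in R (so I is a common ideal of R and S). If the induced extension R/I ⊆ S/I is local (resp. strongly local), then R ⊆ S is local (resp. strongly local). -/
/-- A ring extension `R ⊆ S` is *local* if `U(R) = U(S) ∩ R`:
every element of `R` invertible in `S` has its inverse in `R`. -/
def Subring.IsLocalExt {S : Type*} [CommRing S] (R : Subring S) : Prop :=
  ∀ x y : S, x * y = 1 → x ∈ R → y ∈ R

/-- A ring extension `R ⊆ S` is *strongly local* if `U(R) = U(S)`: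
every unit of `S` lies in `R` together with its inverse. -/
def Subring.IsSLExt {S : Type*} [CommRing S] (R : Subring S) : Prop :=
  ∀ x y : S, x * y = 1 → x ∈ R ∧ y ∈ R

namespace Subring

variable {S T : Type*} [CommRing S] [CommRing T] {R : Subring S} {f : S →+* T}

theorem mem_of_map_mem_map (hker : ∀ x ∈ RingHom.ker f, x ∈ R) {y : S}
    (hy : f y ∈ R.map f) : y ∈ R := by
  obtain ⟨r, hr, hfr⟩ := hy
  have hdiff : y - r ∈ R := hker _ (by rw [RingHom.mem_ker, map_sub, hfr, sub_self])
  simpa using R.add_mem hr hdiff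

theorem IsLocalExt.of_map (hker : ∀ x ∈ RingHom.ker f, x ∈ R) (h : (R.map f).IsLocalExt) :
    R.IsLocalExt := fun x y hxy hx =>
  mem_of_map_mem_map hker <| h (f x) (f y) (by rw [← map_mul, hxy, map_one]) ⟨x, hx, rfl⟩

theorem IsSLExt.of_map (hker : ∀ x ∈ RingHom.ker f, x ∈ R) (h : (R.map f).IsSLExt) :
    R.IsSLExt := fun x y hxy =>
  have hmap := h (f x) (f y) (by rw [← map_mul, hxy, map_one])
  ⟨mem_of_map_mem_map hker hmap.1, mem_of_map_mem_map hker hmap.2⟩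

end Subring

theorem local_and_SL_descend_from_quotient_by_common_ideal
    {S : Type*} [CommRing S] (R : Subring S) (I : Ideal S)
    (hI : ∀ x ∈ I, x ∈ R) :
    ((R.map (Ideal.Quotient.mk I)).IsLocalExt → R.IsLocalExt) ∧
    ((R.map (Ideal.Quotient.mk I)).IsSLExt → R.IsSLExt) := by
  have hker : ∀ x ∈ RingHom.ker (Ideal.Quotient.mk I), x ∈ R := by rwa [Ideal.mk_ker]
  exact ⟨.of_map hker, .of_map hker⟩
end

section
/- Let I be a semiprime (radical) ideal of a commutative ring R and set R//I := R[X]/(X·I[X]), the quotient of the polynomial ring R[X] by the ideal of all polynomials with zero constant term and all coefficients in I (the product of the principal ideal (X) with the ideal I[X] of polynomials with coefficients in I). Then the canonical ring homomorphism R → R//I is injective, and the extension R ⊆ R//I is strongly local and t-closed; moreover the conductor (R : R//I) := {x ∈ R//I | x·(R//I) ⊆ R} equals I, and if R is reduced then R//I is reduced. -/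
/-!
An element of `R//I` comes from `R` exactly when its image under the reduction
`R//I → (R/I)[X]` is a constant polynomial, since a polynomial whose non-constant coefficients
lie in `I` differs from its constant term by an element of `X·I[X]`. As `I` is radical, `R/I` is
reduced, and over a reduced ring every unit and every nilpotent of the polynomial ring is
constant; so is every `F` with `F² - sF` and `F³ - sF²` constant, because modulo each prime
`F·(F² - sF) = F³ - sF²` forces `deg F = 0` by additivity of degrees. Taking constant terms
retracts `R//I` onto `R`, and `a` lies in the conductor only if `a·X` is constant modulo `I`.
-/

open Polynomial

/-- The canonical ring homomorphism `R → R//I := R[X]/(X·I[X])`. -/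
noncomputable def cohnMk {R : Type*} [CommRing R] (I : Ideal R) :
    R →+* Polynomial R ⧸ (Ideal.span {(X : Polynomial R)} * I.map (C : R →+* Polynomial R)) :=
  (Ideal.Quotient.mk _).comp (C : R →+* Polynomial R)

namespace Polynomial

variable {D : Type*} [CommRing D]

instance [IsReduced D] : IsReduced D[X] :=
  ⟨fun _ hF => ext fun n => (Polynomial.isNilpotent_iff.mp hF n).eq_zero⟩

theorem natDegree_eq_zero_of_natDegree_sq_sub_C_mul_eq_zero_of_isDomain [IsDomain D]
    {F : D[X]} {s : D}
    (h2 : (F ^ 2 - C s * F).natDegree = 0) (h3 : (F ^ 3 - C s * F ^ 2).natDegree = 0) :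
    F.natDegree = 0 := by
  have hfactor : F ^ 3 - C s * F ^ 2 = F * (F ^ 2 - C s * F) := by ring
  by_cases hF : F = 0
  · simp [hF]
  by_cases hG : F ^ 2 - C s * F = 0
  · have hzero : F * (F - C s) = 0 := by rw [← hG]; ring
    rw [sub_eq_zero.mp ((mul_eq_zero.mp hzero).resolve_left hF), natDegree_C]
  · rw [hfactor, natDegree_mul hF hG, h2] at h3
    simpa using h3

theorem natDegree_eq_zero_of_forall_isPrime [IsReduced D] {F : D[X]}
    (h : ∀ p : Ideal D, p.IsPrime → (F.map (Ideal.Quotient.mk p)).natDegree = 0) :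
    F.natDegree = 0 := by
  rw [← Nat.le_zero, natDegree_le_iff_coeff_eq_zero]
  intro n hn
  refine IsNilpotent.eq_zero (nilpotent_iff_mem_prime.mpr fun p hp => ?_)
  rw [← Ideal.Quotient.eq_zero_iff_mem, ← coeff_map]
  exact coeff_eq_zero_of_natDegree_lt ((h p hp).trans_lt hn)

theorem natDegree_eq_zero_of_natDegree_sq_sub_C_mul_eq_zero [IsReduced D]
    {F : D[X]} {s : D}
    (h2 : (F ^ 2 - C s * F).natDegree = 0) (h3 : (F ^ 3 - C s * F ^ 2).natDegree = 0) :
    F.natDegree = 0 := by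
  refine natDegree_eq_zero_of_forall_isPrime fun p hp => ?_
  have hmap {G : D[X]} (hG : G.natDegree = 0) : (G.map (Ideal.Quotient.mk p)).natDegree = 0 :=
    Nat.le_zero.mp (hG ▸ natDegree_map_le)
  exact natDegree_eq_zero_of_natDegree_sq_sub_C_mul_eq_zero_of_isDomain
    (s := Ideal.Quotient.mk p s) (by simpa using hmap h2) (by simpa using hmap h3)

theorem natDegree_eq_zero_of_isUnit_of_isReduced [IsReduced D] {F : D[X]} (hF : IsUnit F) :
    F.natDegree = 0 :=
  Nat.eq_zero_of_not_pos fun hpos => not_isUnit_of_natDegree_pos_of_isReduced F hpos hF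

end Polynomial

section Cohn

variable {R : Type*} [CommRing R] (I : Ideal R)

noncomputable abbrev cohnIdeal : Ideal R[X] := Ideal.span {X} * I.map C

theorem cohnIdeal_le_span_X : cohnIdeal I ≤ Ideal.span {X} := Ideal.mul_le_left

theorem cohnIdeal_le_map_C : cohnIdeal I ≤ I.map C := Ideal.mul_le_right

noncomputable def cohnConstantCoeff : R[X] ⧸ cohnIdeal I →+* R :=
  Ideal.Quotient.lift (cohnIdeal I) Polynomial.constantCoeff fun _ hf => by
    rw [← RingHom.mem_ker, ker_constantCoeff]
    exact cohnIdeal_le_span_X I hf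

theorem cohnConstantCoeff_cohnMk (r : R) : cohnConstantCoeff I (cohnMk I r) = r := by
  simp [cohnConstantCoeff, cohnMk]

theorem cohnMk_injective : Function.Injective (cohnMk I) :=
  Function.LeftInverse.injective (cohnConstantCoeff_cohnMk I)

noncomputable def cohnReduction : R[X] ⧸ cohnIdeal I →+* (R ⧸ I)[X] :=
  Ideal.Quotient.lift (cohnIdeal I) (mapRingHom (Ideal.Quotient.mk I)) fun _ hf => by
    rw [← RingHom.mem_ker, ker_mapRingHom, Ideal.mk_ker]
    exact cohnIdeal_le_map_C I hf

@[simp]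
theorem cohnReduction_mk (f : R[X]) :
    cohnReduction I (Ideal.Quotient.mk _ f) = f.map (Ideal.Quotient.mk I) :=
  rfl

@[simp]
theorem cohnReduction_cohnMk (r : R) :
    cohnReduction I (cohnMk I r) = C (Ideal.Quotient.mk I r) := by
  simp [cohnMk]

theorem mem_range_cohnMk_iff {x : R[X] ⧸ cohnIdeal I} :
    x ∈ (cohnMk I).range ↔ (cohnReduction I x).natDegree = 0 := by
  refine ⟨?_, fun hx => ?_⟩
  · rintro ⟨r, rfl⟩
    simp
  obtain ⟨f, rfl⟩ := Ideal.Quotient.mk_surjective x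
  refine ⟨f.coeff 0, Ideal.Quotient.eq.mpr ?_⟩
  have hdivX : f.divX ∈ I.map C := by
    refine Ideal.mem_map_C_iff.mpr fun n => ?_
    rw [coeff_divX, ← Ideal.Quotient.eq_zero_iff_mem, ← coeff_map]
    exact coeff_eq_zero_of_natDegree_lt (by rw [cohnReduction_mk] at hx; omega)
  have hf : C (f.coeff 0) - f = -(X * f.divX) := by linear_combination X_mul_divX_add f
  rw [hf]
  exact neg_mem (Ideal.mul_mem_mul (Ideal.mem_span_singleton_self X) hdivX)

variable {I}

theorem mem_range_cohnMk_of_isUnit (hI : I.IsRadical) {x : R[X] ⧸ cohnIdeal I} (hx : IsUnit x) :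
    x ∈ (cohnMk I).range :=
  have := (Ideal.isRadical_iff_quotient_reduced I).mp hI
  (mem_range_cohnMk_iff I).mpr <|
    natDegree_eq_zero_of_isUnit_of_isReduced (hx.map (cohnReduction I))

theorem mem_range_cohnMk_of_sq_sub_mul_mem (hI : I.IsRadical) {b : R[X] ⧸ cohnIdeal I} {r : R}
    (h2 : b ^ 2 - cohnMk I r * b ∈ (cohnMk I).range)
    (h3 : b ^ 3 - cohnMk I r * b ^ 2 ∈ (cohnMk I).range) : b ∈ (cohnMk I).range := by
  have := (Ideal.isRadical_iff_quotient_reduced I).mp hI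
  rw [mem_range_cohnMk_iff] at h2 h3 ⊢
  simp only [map_sub, map_pow, map_mul, cohnReduction_cohnMk] at h2 h3
  exact natDegree_eq_zero_of_natDegree_sq_sub_C_mul_eq_zero h2 h3

theorem forall_mul_mem_range_cohnMk_iff {x : R[X] ⧸ cohnIdeal I} :
    (∀ z, x * z ∈ (cohnMk I).range) ↔ x ∈ cohnMk I '' I := by
  constructor
  · intro h
    obtain ⟨a, rfl⟩ := mul_one x ▸ h 1
    refine ⟨a, ?_, rfl⟩
    have haX := (mem_range_cohnMk_iff I).mp (h (Ideal.Quotient.mk _ X))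
    simp only [map_mul, cohnReduction_cohnMk, cohnReduction_mk, Polynomial.map_X] at haX
    rw [SetLike.mem_coe, ← Ideal.Quotient.eq_zero_iff_mem]
    by_contra ha
    exact one_ne_zero ((natDegree_C_mul_X _ ha).symm.trans haX)
  · rintro ⟨a, ha, rfl⟩ z
    rw [mem_range_cohnMk_iff, map_mul, cohnReduction_cohnMk,
      Ideal.Quotient.eq_zero_iff_mem.mpr ha, C_0, zero_mul, natDegree_zero]

theorem isReduced_quotient_cohnIdeal (hI : I.IsRadical) [IsReduced R] :
    IsReduced (R[X] ⧸ cohnIdeal I) := by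
  have := (Ideal.isRadical_iff_quotient_reduced I).mp hI
  refine ⟨fun x hx => ?_⟩
  obtain ⟨a, rfl⟩ :=
    (mem_range_cohnMk_iff I).mpr (by rw [(hx.map (cohnReduction I)).eq_zero, natDegree_zero])
  rw [((IsNilpotent.map_iff (cohnMk_injective I)).mp hx).eq_zero, map_zero]

end Cohn

theorem cohn_type_extension_properties {R : Type*} [CommRing R] (I : Ideal R)
    (hI : I.IsRadical) :
    -- the canonical map `R → R//I` is injective
    Function.Injective (cohnMk I) ∧
    -- the extension `R ⊆ R//I` is strongly local: `U(R) = U(R//I)`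
    (∀ x y : Polynomial R ⧸ (Ideal.span {(X : Polynomial R)} * I.map (C : R →+* Polynomial R)),
      x * y = 1 → x ∈ (cohnMk I).range ∧ y ∈ (cohnMk I).range) ∧
    -- the extension `R ⊆ R//I` is t-closed
    (∀ b : Polynomial R ⧸ (Ideal.span {(X : Polynomial R)} * I.map (C : R →+* Polynomial R)),
      (∃ r : R, b ^ 2 - cohnMk I r * b ∈ (cohnMk I).range ∧
        b ^ 3 - cohnMk I r * b ^ 2 ∈ (cohnMk I).range) → b ∈ (cohnMk I).range) ∧
    -- the conductor `(R : R//I)` equals `I`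
    {x : Polynomial R ⧸ (Ideal.span {(X : Polynomial R)} * I.map (C : R →+* Polynomial R)) |
      ∀ z, x * z ∈ (cohnMk I).range} = cohnMk I '' (I : Set R) ∧
    -- if `R` is reduced then so is `R//I`
    (IsReduced R →
      IsReduced (Polynomial R ⧸ (Ideal.span {(X : Polynomial R)} * I.map (C : R →+* Polynomial R)))) :=
  ⟨cohnMk_injective I,
    fun _ _ h => ⟨mem_range_cohnMk_of_isUnit hI (.of_mul_eq_one _ h),
      mem_range_cohnMk_of_isUnit hI (.of_mul_eq_one_right _ h)⟩,
    fun _ ⟨_, h2, h3⟩ => mem_range_cohnMk_of_sq_sub_mul_mem hI h2 h3,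
    Set.ext fun _ => forall_mul_mem_range_cohnMk_iff,
    fun _ => isReduced_quotient_cohnIdeal hI⟩
end

section
/- Let R ⊆ S be an extension of commutative rings. If for every maximal ideal M of R with R_M ≠ S_M (i.e., every M in the maximal support MSupp(S/R) of the R-module S/R) the induced extension of localizations R_M ⊆ S_M is strongly local (resp. local), then R ⊆ S is strongly local (resp. local). -/
/-- A ring homomorphism is *local* if `f x` is a unit exactly when `x` is a unit. -/
def IsLocalPred {R S : Type*} [CommRing R] [CommRing S] (f : R →+* S) : Prop :=
  ∀ x : R, IsUnit (f x) ↔ IsUnit x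

/-- A ring homomorphism is *strongly local* if `f(U(R)) = U(S)`. -/
def IsSLPred {R S : Type*} [CommRing R] [CommRing S] (f : R →+* S) : Prop :=
  f '' {x : R | IsUnit x} = {y : S | IsUnit y}

/-- The complement of a prime ideal, with the primality hypothesis explicit. -/
def primeComplOf {R : Type*} [CommRing R] (M : Ideal R) (hM : M.IsPrime) : Submonoid R :=
  @Ideal.primeCompl R _ M hM

/-- The canonical ring homomorphism `R_M → S_M` induced by a ring extension
`R ⊆ S` and a prime ideal `M` of `R`, where `S_M` is the localization of `S`
at the multiplicative set `R \ M`. -/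
noncomputable def extLocMap {S : Type*} [CommRing S] (R : Subring S) (M : Ideal R)
    (hM : M.IsPrime) :
    Localization (primeComplOf M hM) →+*
      Localization (Submonoid.map (R.subtype : ↥R →+* S) (primeComplOf M hM)) :=
  IsLocalization.map _ (R.subtype) (Submonoid.le_comap_map (primeComplOf M hM))

/-!
Membership in `R` is a local property: for `z ∈ S`, the elements `r ∈ R` with `r z ∈ R` form an
ideal of `R`, which is all of `R` exactly when `z ∈ R`. If `z / 1 ∈ S_M` comes from `R_M`, that
ideal meets `R \ M`; so if this happens at every maximal ideal `M`, then `z ∈ R`. Where `R_M → S_M`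
is onto it happens for every `z`; where it is strongly local it happens for the units of `S`,
and where it is local for the inverses in `S` of the elements of `R` that are units of `S`.
-/

lemma IsSLPred.mem_range_of_isUnit {A B : Type*} [CommRing A] [CommRing B] {f : A →+* B}
    (hf : IsSLPred f) {b : B} (hb : IsUnit b) : b ∈ f.range := by
  obtain ⟨a, -, rfl⟩ : b ∈ f '' {x | IsUnit x} := hf ▸ hb
  exact ⟨a, rfl⟩

lemma IsLocalPred.mem_range_of_mul_eq_one {A B : Type*} [CommRing A] [CommRing B]
    {f : A →+* B} (hf : IsLocalPred f) {a : A} {b : B} (hab : f a * b = 1) : b ∈ f.range := by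
  obtain ⟨u, rfl⟩ := (hf a).mp (.of_mul_eq_one b hab)
  refine ⟨↑u⁻¹, left_inv_eq_right_inv ?_ hab⟩
  rw [← map_mul, Units.inv_mul, map_one]

namespace Subring

variable {S : Type*} [CommRing S] (R : Subring S)

def conductor (z : S) : Ideal R where
  carrier := {r | (r : S) * z ∈ R}
  add_mem' {a b} ha hb := by
    simpa only [Set.mem_ofPred, AddMemClass.coe_add, add_mul] using R.add_mem ha hb
  zero_mem' := by
    simpa only [Set.mem_ofPred, ZeroMemClass.coe_zero, zero_mul] using R.zero_mem
  smul_mem' c r hr := by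
    simpa only [Set.mem_ofPred, smul_eq_mul, MulMemClass.coe_mul, mul_assoc] using
      R.mul_mem c.2 hr

variable {R}

lemma mem_conductor {z : S} {r : R} : r ∈ R.conductor z ↔ (r : S) * z ∈ R := Iff.rfl

lemma conductor_eq_top_iff {z : S} : R.conductor z = ⊤ ↔ z ∈ R := by
  rw [Ideal.eq_top_iff_one, mem_conductor, OneMemClass.coe_one, one_mul]

lemma extLocMap_algebraMap {M : Ideal R} (hM : M.IsPrime) (a : R) :
    extLocMap R M hM (algebraMap R _ a) = algebraMap S _ (a : S) :=
  IsLocalization.map_eq _ _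

lemma exists_mem_primeComplOf_mul_mem_of_algebraMap_mem_range {M : Ideal R} (hM : M.IsPrime)
    {z : S} (hz : algebraMap S _ z ∈ (extLocMap R M hM).range) :
    ∃ t ∈ primeComplOf M hM, (t : S) * z ∈ R := by
  obtain ⟨α, hα⟩ := hz
  obtain ⟨⟨a, u⟩, hu⟩ := IsLocalization.surj (primeComplOf M hM) α
  have hzu := congrArg (extLocMap R M hM) hu
  rw [map_mul, hα, extLocMap_algebraMap, extLocMap_algebraMap, ← map_mul,
    IsLocalization.eq_iff_exists (Submonoid.map R.subtype (primeComplOf M hM))] at hzu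
  obtain ⟨⟨_, t, ht, rfl⟩, hc⟩ := hzu
  simp only [subtype_apply] at hc
  refine ⟨t * u, mul_mem ht u.2, ?_⟩
  have htu : ((t * u : R) : S) * z = t * a := by
    rw [MulMemClass.coe_mul]
    linear_combination hc
  exact htu ▸ R.mul_mem t.2 a.2

lemma mem_of_forall_algebraMap_mem_range_extLocMap {z : S}
    (h : ∀ (M : Ideal R) (hM : M.IsMaximal), ¬ Function.Surjective (extLocMap R M hM.isPrime) →
      algebraMap S _ z ∈ (extLocMap R M hM.isPrime).range) : z ∈ R := by
  by_contra hz
  obtain ⟨M, hM, hle⟩ := Ideal.exists_le_maximal _ (mt conductor_eq_top_iff.mp hz)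
  have hrange : algebraMap S _ z ∈ (extLocMap R M hM.isPrime).range := by
    by_cases hs : Function.Surjective (extLocMap R M hM.isPrime)
    · exact hs _
    · exact h M hM hs
  obtain ⟨t, ht, htz⟩ := exists_mem_primeComplOf_mul_mem_of_algebraMap_mem_range hM.isPrime hrange
  exact ht (hle htz)

end Subring

theorem SL_and_local_are_local_properties {S : Type*} [CommRing S] (R : Subring S) :
    ((∀ (M : Ideal R) (hM : M.IsMaximal),
        ¬ Function.Surjective (extLocMap R M hM.isPrime) →
          IsSLPred (extLocMap R M hM.isPrime)) → R.IsSLExt) ∧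
    ((∀ (M : Ideal R) (hM : M.IsMaximal),
        ¬ Function.Surjective (extLocMap R M hM.isPrime) →
          IsLocalPred (extLocMap R M hM.isPrime)) → R.IsLocalExt) := by
  constructor
  · intro h x y hxy
    have hunit : ∀ z : S, IsUnit z → z ∈ R := fun z hz =>
      Subring.mem_of_forall_algebraMap_mem_range_extLocMap fun M hM hs =>
        (h M hM hs).mem_range_of_isUnit (hz.map _)
    exact ⟨hunit x (.of_mul_eq_one y hxy), hunit y (.of_mul_eq_one_right x hxy)⟩
  · intro h x y hxy hx
    refine Subring.mem_of_forall_algebraMap_mem_range_extLocMap fun M hM hs =>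
      (h M hM hs).mem_range_of_mul_eq_one (a := algebraMap R _ ⟨x, hx⟩) ?_
    rw [Subring.extLocMap_algebraMap, ← map_mul, hxy, map_one]
end

section
/- Let R be a commutative ring and M an R-module, and let R(+)M denote the Nagata idealization (trivial square-zero extension) of M over R. (1) The canonical map R → R(+)M, x ↦ (x,0), is a local morphism, and it is strongly local if and only if M = 0; moreover, for an R-submodule N of M, the induced extension R(+)N ⊆ R(+)M is local, and it is strongly local if and only if N = M. (2) If R ⊆ S is an extension of commutative rings and M is an S-module (hence also an R-module), then R ⊆ S is strongly local if and only if the induced extension R(+)M ⊆ S(+)M is strongly local. -/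
/-- For a submodule `N` of the `R`-module `M`, the Nagata idealization `R(+)N`
viewed as a subring of `R(+)M`. -/
def idealizationSubring {R M : Type*} [CommRing R] [AddCommGroup M] [Module R M]
    [Module Rᵐᵒᵖ M] [IsCentralScalar R M] (N : Submodule R M) :
    Subring (TrivSqZeroExt R M) where
  carrier := {p | p.snd ∈ N}
  mul_mem' := by
    intro a b ha hb
    simp only [Set.mem_setOf_eq, TrivSqZeroExt.snd_mul, op_smul_eq_smul] at *
    exact N.add_mem (N.smul_mem _ hb) (N.smul_mem _ ha)
  one_mem' := by simp [Set.mem_setOf_eq, TrivSqZeroExt.snd_one]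
  add_mem' := by
    intro a b ha hb
    simp only [Set.mem_setOf_eq, TrivSqZeroExt.snd_add] at *
    exact N.add_mem ha hb
  zero_mem' := by simp [Set.mem_setOf_eq]
  neg_mem' := by
    intro a ha
    simp only [Set.mem_setOf_eq, TrivSqZeroExt.snd_neg] at *
    exact N.neg_mem ha

/-- For a subring `R` of `S` and an `S`-module `M`, the Nagata idealization `R(+)M`
viewed as a subring of `S(+)M`. -/
def idealizationFstSubring {S M : Type*} [CommRing S] [AddCommGroup M] [Module S M]
    [Module Sᵐᵒᵖ M] [IsCentralScalar S M] (R : Subring S) :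
    Subring (TrivSqZeroExt S M) where
  carrier := {p | p.fst ∈ R}
  mul_mem' := by
    intro a b ha hb
    simp only [Set.mem_setOf_eq, TrivSqZeroExt.fst_mul] at *
    exact R.mul_mem ha hb
  one_mem' := by simpa [Set.mem_setOf_eq] using R.one_mem
  add_mem' := by
    intro a b ha hb
    simp only [Set.mem_setOf_eq, TrivSqZeroExt.fst_add] at *
    exact R.add_mem ha hb
  zero_mem' := by simpa [Set.mem_setOf_eq] using R.zero_mem
  neg_mem' := by
    intro a ha
    simp only [Set.mem_setOf_eq, TrivSqZeroExt.fst_neg] at *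
    exact R.neg_mem ha

namespace TrivSqZeroExt

theorem one_add_inr_mul_one_add_inr_neg {R M : Type*} [Semiring R] [AddCommGroup M]
    [Module R M] [Module Rᵐᵒᵖ M] (m : M) :
    (1 + inr m : TrivSqZeroExt R M) * (1 + inr (-m)) = 1 := by
  ext <;> simp

theorem snd_eq_neg_smul_smul_of_mul_eq_one {R M : Type*} [CommRing R] [AddCommGroup M]
    [Module R M] [Module Rᵐᵒᵖ M] [IsCentralScalar R M] {x y : TrivSqZeroExt R M}
    (h : x * y = 1) :
    y.snd = -(y.fst • y.fst • x.snd) := by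
  have hfst : x.fst * y.fst = 1 := by rw [← fst_mul, h, fst_one]
  have hy : y = inl y.fst + inr (-(y.fst • MulOpposite.op y.fst • x.snd)) :=
    left_inv_eq_right_inv (mul_comm x y ▸ h) (mul_right_eq_one x y.fst hfst)
  rw [hy]
  simp [op_smul_eq_smul]

end TrivSqZeroExt

open TrivSqZeroExt

section Idealization

variable {R M : Type*} [CommRing R] [AddCommGroup M] [Module R M] [Module Rᵐᵒᵖ M]
  [IsCentralScalar R M]

theorem isLocalPred_algebraMap_trivSqZeroExt :
    IsLocalPred (algebraMap R (TrivSqZeroExt R M)) := fun x => by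
  rw [algebraMap_eq_inl]
  exact isUnit_inl_iff

theorem isSLPred_algebraMap_trivSqZeroExt_iff :
    IsSLPred (algebraMap R (TrivSqZeroExt R M)) ↔ ∀ m : M, m = 0 := by
  rw [IsSLPred, algebraMap_eq_inl]
  constructor
  · intro h m
    obtain ⟨r, -, hr⟩ : (1 + inr m : TrivSqZeroExt R M) ∈ inl '' {x : R | IsUnit x} :=
      h ▸ .of_mul_eq_one _ (one_add_inr_mul_one_add_inr_neg m)
    simpa using (congrArg snd hr).symm
  · intro hM
    refine Set.Subset.antisymm ?_ fun y hy => ⟨y.fst, isUnit_iff_isUnit_fst.mp hy, ?_⟩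
    · rintro _ ⟨r, hr, rfl⟩
      exact isUnit_inl_iff.mpr hr
    · ext
      · rfl
      · exact (hM _).symm

theorem idealizationSubring_isLocalExt (N : Submodule R M) :
    (idealizationSubring N).IsLocalExt := by
  intro x y h hx
  change y.snd ∈ N
  rw [snd_eq_neg_smul_smul_of_mul_eq_one h]
  exact N.neg_mem (N.smul_mem _ (N.smul_mem _ hx))

theorem idealizationSubring_isSLExt_iff (N : Submodule R M) :
    (idealizationSubring N).IsSLExt ↔ N = ⊤ := by
  constructor
  · intro h
    refine eq_top_iff.mpr fun m _ => ?_
    have hm : (1 + inr m : TrivSqZeroExt R M).snd ∈ N :=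
      (h _ _ (one_add_inr_mul_one_add_inr_neg m)).1
    simpa using hm
  · rintro rfl _ _ _
    exact ⟨trivial, trivial⟩

end Idealization

theorem Subring.isSLExt_comap_iff_of_leftInverse {A B : Type*} [CommRing A] [CommRing B]
    {f : A →+* B} {g : B →+* A} (hfg : Function.LeftInverse f g) (R : Subring B) :
    (R.comap f).IsSLExt ↔ R.IsSLExt := by
  constructor
  · intro h s t hst
    have := h (g s) (g t) (by rw [← map_mul, hst, map_one])
    simpa [Subring.mem_comap, hfg s, hfg t] using this
  · intro h x y hxy
    exact h (f x) (f y) (by rw [← map_mul, hxy, map_one])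

theorem idealizationFstSubring_isSLExt_iff {S M : Type*} [CommRing S] [AddCommGroup M]
    [Module S M] [Module Sᵐᵒᵖ M] [IsCentralScalar S M] (R : Subring S) :
    (idealizationFstSubring (M := M) R).IsSLExt ↔ R.IsSLExt :=
  Subring.isSLExt_comap_iff_of_leftInverse (f := (fstHom S S M).toRingHom)
    (g := inlHom S M) (fun _ => rfl) R

theorem nagata_idealization_local_and_SL
    {R M : Type*} [CommRing R] [AddCommGroup M] [Module R M]
    [Module Rᵐᵒᵖ M] [IsCentralScalar R M] (N : Submodule R M)
    {S : Type*} [CommRing S] (R' : Subring S)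
    (M' : Type*) [AddCommGroup M'] [Module S M'] [Module Sᵐᵒᵖ M'] [IsCentralScalar S M'] :
    -- (1) the canonical map `R → R(+)M` is local
    IsLocalPred (algebraMap R (TrivSqZeroExt R M)) ∧
    -- it is strongly local iff `M = 0`
    (IsSLPred (algebraMap R (TrivSqZeroExt R M)) ↔ ∀ m : M, m = 0) ∧
    -- for a submodule `N ⊆ M`, the extension `R(+)N ⊆ R(+)M` is local
    (idealizationSubring N).IsLocalExt ∧
    -- and it is strongly local iff `N = M`
    ((idealizationSubring N).IsSLExt ↔ N = ⊤) ∧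
    -- (2) for `R ⊆ S` and an `S`-module `M'`, `R ⊆ S` is SL iff `R(+)M' ⊆ S(+)M'` is SL
    (R'.IsSLExt ↔ (idealizationFstSubring (M := M') R').IsSLExt) :=
  ⟨isLocalPred_algebraMap_trivSqZeroExt, isSLPred_algebraMap_trivSqZeroExt_iff,
    idealizationSubring_isLocalExt N, idealizationSubring_isSLExt_iff N,
    (idealizationFstSubring_isSLExt_iff R').symm⟩
end

section
/- Let R ⊆ S be an extension of commutative rings. (1) If R ⊆ S has lying over (every prime ideal of R is the contraction to R of some prime ideal of S), then R ⊆ S is local. (2) If R ⊆ S is a survival extension (IS ≠ S for every proper ideal I of R, where IS is the ideal of S generated by I), then R ⊆ S is local. (3) If the ideals of R are linearly ordered by inclusion, then R ⊆ S is a survival extension if and only if R ⊆ S is local. -/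
namespace Ideal

variable {R S : Type*} [CommRing R] [CommRing S]

theorem map_ne_top_of_forall_isPrime_exists_comap_eq (f : R →+* S)
    (hlo : ∀ P : Ideal R, P.IsPrime → ∃ Q : Ideal S, Q.IsPrime ∧ Q.comap f = P)
    {I : Ideal R} (hI : I ≠ ⊤) : I.map f ≠ ⊤ := by
  obtain ⟨M, hM, hIM⟩ := exists_le_maximal I hI
  obtain ⟨Q, hQ, rfl⟩ := hlo M hM.isPrime
  exact ne_top_of_le_ne_top hQ.ne_top (map_le_iff_le_comap.mpr hIM)

theorem exists_mem_eq_mul_of_mem_map (f : R →+* S) (hdvd : ∀ a b : R, a ∣ b ∨ b ∣ a)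
    {I : Ideal R} {z : S} (hz : z ∈ I.map f) : ∃ a ∈ I, ∃ s : S, z = f a * s := by
  refine Submodule.span_induction ?_ ?_ ?_ ?_ hz
  · rintro _ ⟨a, ha, rfl⟩
    exact ⟨a, ha, 1, (mul_one _).symm⟩
  · exact ⟨0, I.zero_mem, 0, by simp⟩
  · rintro _ _ _ _ ⟨a, ha, s, rfl⟩ ⟨b, hb, t, rfl⟩
    rcases hdvd a b with ⟨r, rfl⟩ | ⟨r, rfl⟩
    · exact ⟨a, ha, s + f r * t, by rw [map_mul]; ring⟩
    · exact ⟨b, hb, f r * s + t, by rw [map_mul]; ring⟩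
  · rintro c _ _ ⟨a, ha, s, rfl⟩
    exact ⟨a, ha, c * s, by rw [smul_eq_mul]; ring⟩

end Ideal

namespace Subring

variable {S : Type*} [CommRing S] (R : Subring S)

theorem isLocalExt_of_map_ne_top (hs : ∀ I : Ideal R, I ≠ ⊤ → I.map R.subtype ≠ ⊤) :
    R.IsLocalExt := by
  intro x y hxy hx
  have hspan : Ideal.span {(⟨x, hx⟩ : R)} = ⊤ := by
    by_contra hne
    apply hs _ hne
    rw [Ideal.eq_top_iff_one, ← hxy]
    exact Ideal.mul_mem_right _ _
      (Ideal.mem_map_of_mem R.subtype (Ideal.mem_span_singleton_self _))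
  obtain ⟨v, hv⟩ := (Ideal.span_singleton_eq_top.mp hspan).exists_right_inv
  have hxv : x * v = 1 := congrArg Subtype.val hv
  have hyv : y = v := by
    calc y = (x * v) * y := by rw [hxv, one_mul]
      _ = v := by rw [mul_right_comm, hxy, one_mul]
  exact hyv ▸ v.2

theorem map_ne_top_of_isLocalExt (hdvd : ∀ a b : R, a ∣ b ∨ b ∣ a) (hl : R.IsLocalExt)
    {I : Ideal R} (hI : I ≠ ⊤) : I.map R.subtype ≠ ⊤ := by
  intro htop
  obtain ⟨a, ha, s, hs⟩ :=
    Ideal.exists_mem_eq_mul_of_mem_map R.subtype hdvd ((Ideal.eq_top_iff_one _).mp htop)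
  have hsR : s ∈ R := hl a s hs.symm a.2
  have has : a * ⟨s, hsR⟩ = 1 := Subtype.ext hs.symm
  exact hI ((Ideal.eq_top_iff_one _).mpr (has ▸ I.mul_mem_right _ ha))

end Subring

theorem lying_over_or_survival_implies_local {S : Type*} [CommRing S] (R : Subring S) :
    -- (1) lying over implies local
    ((∀ P : Ideal R, P.IsPrime → ∃ Q : Ideal S, Q.IsPrime ∧ Q.comap R.subtype = P) →
      R.IsLocalExt) ∧
    -- (2) survival implies local
    ((∀ I : Ideal R, I ≠ ⊤ → I.map R.subtype ≠ ⊤) → R.IsLocalExt) ∧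
    -- (3) if the ideals of `R` are linearly ordered, survival ↔ local
    ((∀ I J : Ideal R, I ≤ J ∨ J ≤ I) →
      ((∀ I : Ideal R, I ≠ ⊤ → I.map R.subtype ≠ ⊤) ↔ R.IsLocalExt)) := by
  refine ⟨fun hlo => R.isLocalExt_of_map_ne_top fun _ =>
      Ideal.map_ne_top_of_forall_isPrime_exists_comap_eq R.subtype hlo,
    R.isLocalExt_of_map_ne_top, fun htot => ⟨R.isLocalExt_of_map_ne_top, fun hl _ => ?_⟩⟩
  have hdvd (a b : R) : a ∣ b ∨ b ∣ a := by
    simpa only [Ideal.span_singleton_le_span_singleton] using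
      (htot (Ideal.span {b}) (Ideal.span {a}))
  exact R.map_ne_top_of_isLocalExt hdvd hl
end

section
/- Let R ⊆ S be an extension of commutative rings. The following are equivalent: (1) R ⊆ S is strongly local; (2) the induced extension of polynomial rings R[X] ⊆ S[X] is strongly local; (3) the extension R + XS[X] ⊆ S[X] is strongly local, where R + XS[X] is the subring of S[X] consisting of the polynomials whose constant coefficient lies in R. Moreover, if these equivalent conditions hold, then Nil(R) = Nil(S), i.e., every nilpotent element of S lies in R. -/
/-- The subring `R[X]` of `S[X]`: polynomials all of whose coefficients lie in `R`. -/
def polySubring {S : Type*} [CommRing S] (R : Subring S) : Subring (Polynomial S) where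
  carrier := {p | ∀ n, p.coeff n ∈ R}
  mul_mem' := by
    intro p q hp hq n
    rw [Polynomial.coeff_mul]
    exact sum_mem fun c _ => R.mul_mem (hp _) (hq _)
  one_mem' := by
    intro n
    rw [Polynomial.coeff_one]
    split
    · exact R.one_mem
    · exact R.zero_mem
  add_mem' := by
    intro p q hp hq n
    rw [Polynomial.coeff_add]
    exact R.add_mem (hp n) (hq n)
  zero_mem' := by intro n; simpa using R.zero_mem
  neg_mem' := by
    intro p hp n
    rw [Polynomial.coeff_neg]
    exact R.neg_mem (hp n)

/-- The subring `R + X·S[X]` of `S[X]`: polynomials whose constant coefficient lies in `R`. -/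
def tailSubring {S : Type*} [CommRing S] (R : Subring S) : Subring (Polynomial S) where
  carrier := {p | p.coeff 0 ∈ R}
  mul_mem' := by
    intro p q hp hq
    simp only [Set.mem_setOf_eq, Polynomial.mul_coeff_zero] at *
    exact R.mul_mem hp hq
  one_mem' := by simpa using R.one_mem
  add_mem' := by
    intro p q hp hq
    simp only [Set.mem_setOf_eq, Polynomial.coeff_add] at *
    exact R.add_mem hp hq
  zero_mem' := by simpa using R.zero_mem
  neg_mem' := by
    intro p hp
    simp only [Set.mem_setOf_eq, Polynomial.coeff_neg] at *
    exact R.neg_mem hp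

/-!
A unit of `S[X]` has a unit constant coefficient and nilpotent higher coefficients, and `1 + x`
is a unit of `S` for every nilpotent `x`; so if `U(R) = U(S)` then every unit of `S[X]` has all
its coefficients in `R`. Since `R[X] ⊆ R + X S[X]` and the constants in `R + X S[X]` are exactly
those of `R`, this closes the cycle (1) ⇒ (2) ⇒ (3) ⇒ (1).
-/

open Polynomial

namespace Subring

variable {S : Type*} [CommRing S]

theorem isSLExt_iff {R : Subring S} : R.IsSLExt ↔ ∀ x : S, IsUnit x → x ∈ R :=
  ⟨fun h _ ⟨u, hu⟩ => hu ▸ (h _ _ u.mul_inv).1,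
    fun h x y hxy => ⟨h x (.of_mul_eq_one y hxy), h y (.of_mul_eq_one x (mul_comm x y ▸ hxy))⟩⟩

theorem IsSLExt.mono {R R' : Subring S} (hle : R ≤ R') (h : R.IsSLExt) : R'.IsSLExt :=
  fun x y hxy => (h x y hxy).imp (@hle x) (@hle y)

theorem IsSLExt.comap {S' : Type*} [CommRing S'] {T : Subring S'} (f : S →+* S')
    (h : T.IsSLExt) : (T.comap f).IsSLExt :=
  fun x y hxy => h (f x) (f y) (by rw [← map_mul, hxy, map_one])

theorem IsSLExt.mem_of_isNilpotent {R : Subring S} (h : R.IsSLExt) {x : S}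
    (hx : IsNilpotent x) : x ∈ R := by
  have h1x : 1 + x ∈ R := isSLExt_iff.mp h _ hx.isUnit_one_add
  simpa using R.sub_mem h1x R.one_mem

theorem IsSLExt.polySubring {R : Subring S} (h : R.IsSLExt) : (polySubring R).IsSLExt := by
  refine isSLExt_iff.mpr fun p hp n => ?_
  obtain ⟨hunit, hnil⟩ := coeff_isUnit_isNilpotent_of_isUnit hp
  rcases eq_or_ne n 0 with rfl | hn
  · exact isSLExt_iff.mp h _ hunit
  · exact h.mem_of_isNilpotent (hnil n hn)

theorem IsSLExt.setOf_isNilpotent_eq_image {R : Subring S} (h : R.IsSLExt) :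
    {x : S | IsNilpotent x} = Subtype.val '' {x : R | IsNilpotent x} := by
  ext x
  refine ⟨fun hx => ⟨⟨x, h.mem_of_isNilpotent hx⟩, ?_, rfl⟩, ?_⟩
  · exact (IsNilpotent.map_iff (f := R.subtype) Subtype.val_injective).mp hx
  · rintro ⟨y, hy, rfl⟩
    exact hy.map R.subtype

end Subring

theorem polySubring_le_tailSubring {S : Type*} [CommRing S] (R : Subring S) :
    polySubring R ≤ tailSubring R :=
  fun _ hp => hp 0

theorem comap_C_tailSubring {S : Type*} [CommRing S] (R : Subring S) :
    (tailSubring R).comap C = R := by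
  ext x
  change (C x).coeff 0 ∈ R ↔ x ∈ R
  rw [coeff_C_zero]

theorem SL_iff_SL_polynomials {S : Type*} [CommRing S] (R : Subring S) :
    -- (1) ↔ (2)
    (R.IsSLExt ↔ (polySubring R).IsSLExt) ∧
    -- (1) ↔ (3)
    (R.IsSLExt ↔ (tailSubring R).IsSLExt) ∧
    -- if these conditions hold then `Nil(R) = Nil(S)`
    (R.IsSLExt → {x : S | IsNilpotent x} = Subtype.val '' {x : ↥R | IsNilpotent x}) := by
  have h12 : R.IsSLExt → (polySubring R).IsSLExt := Subring.IsSLExt.polySubring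
  have h23 : (polySubring R).IsSLExt → (tailSubring R).IsSLExt :=
    Subring.IsSLExt.mono (polySubring_le_tailSubring R)
  have h31 : (tailSubring R).IsSLExt → R.IsSLExt := fun h =>
    comap_C_tailSubring R ▸ h.comap C
  exact ⟨⟨h12, h31 ∘ h23⟩, ⟨h23 ∘ h12, h31⟩, Subring.IsSLExt.setOf_isNilpotent_eq_image⟩
end

section
/- Let R ⊆ S be an extension of commutative rings. If the induced extension of formal power series rings R[[X]] ⊆ S[[X]] is strongly local, then R = S. -/
/-- The subring `R[[X]]` of `S[[X]]`: power series all of whose coefficients lie in `R`. -/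
def powerSeriesSubring {S : Type*} [CommRing S] (R : Subring S) : Subring (PowerSeries S) where
  carrier := {f | ∀ n, PowerSeries.coeff n f ∈ R}
  mul_mem' := by
    intro f g hf hg n
    rw [PowerSeries.coeff_mul]
    exact sum_mem fun c _ => R.mul_mem (hf _) (hg _)
  one_mem' := by
    intro n
    rw [PowerSeries.coeff_one]
    split
    · exact R.one_mem
    · exact R.zero_mem
  add_mem' := by
    intro f g hf hg n
    rw [map_add]
    exact R.add_mem (hf n) (hg n)
  zero_mem' := by intro n; simpa using R.zero_mem
  neg_mem' := by
    intro f hf n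
    rw [map_neg]
    exact R.neg_mem (hf n)

/-!
For `s ∈ S`, the series `1 - sX` is a unit of `S[[X]]` with inverse `∑ sⁿXⁿ`. If `R[[X]] ⊆ S[[X]]`
is strongly local, `1 - sX` lies in `R[[X]]`, so its coefficient `-s` of `X` lies in `R`.
-/

namespace PowerSeries

theorem mk_pow_mul_one_sub_C_mul_X {S : Type*} [CommRing S] (s : S) :
    mk (s ^ ·) * (1 - C s * X) = 1 := by
  simpa [rescale_X, rescale_mk] using congrArg (rescale s) (mk_one_mul_one_sub_eq_one S)

end PowerSeries

open PowerSeries in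
theorem mem_of_one_sub_C_mul_X_mem_powerSeriesSubring {S : Type*} [CommRing S] (R : Subring S)
    {s : S} (hs : 1 - C s * X ∈ powerSeriesSubring R) : s ∈ R := by
  simpa using R.neg_mem (hs 1)

theorem SL_power_series_implies_equality {S : Type*} [CommRing S] (R : Subring S)
    (h : (powerSeriesSubring R).IsSLExt) : R = ⊤ :=
  eq_top_iff.2 fun s _ => mem_of_one_sub_C_mul_X_mem_powerSeriesSubring R
    (h _ _ (PowerSeries.mk_pow_mul_one_sub_C_mul_X s)).2
end

section
/- For a commutative ring R with Jacobson radical J(R), the following are equivalent: (1) R is J-regular, i.e., for every x ∈ R there exists y ∈ R with x²y − x ∈ J(R); (2) the set of maximal ideals of R is a closed subset of the prime spectrum Spec(R) with the Zariski topology; (3) for every x ∈ R there exists y ∈ R such that xy ∈ J(R) and x + y is a unit of R. -/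
/-!
Modulo `J = J(R)`, condition (1) says that `R ⧸ J` is von Neumann regular. Since `J` is radical,
`R ⧸ J` is reduced, and a reduced ring is von Neumann regular exactly when it has Krull
dimension zero, i.e. when every prime of `R` containing `J` is maximal. As the closure of the set
of maximal ideals in `Spec R` is the zero locus of their intersection `J`, this is also what it
means for that set to be closed.
-/

open Ideal

section

variable {R : Type*} [CommRing R]

theorem Ring.krullDimLE_zero_of_forall_exists_sq_mul_eq (h : ∀ x : R, ∃ y, x ^ 2 * y = x) :
    Ring.KrullDimLE 0 R := by
  refine .mk₀ fun p hp ↦ isMaximal_iff.mpr ⟨fun h1 ↦ hp.ne_top ((eq_top_iff_one p).mpr h1), ?_⟩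
  intro I x hpI hxp hxI
  obtain ⟨y, hy⟩ := h x
  have hx0 : x * (x * y - 1) = 0 := by linear_combination hy
  have hxy : x * y - 1 ∈ p := (hp.mem_or_mem (hx0 ▸ p.zero_mem)).resolve_left hxp
  simpa using I.sub_mem (I.mul_mem_right y hxI) (hpI hxy)

theorem Ring.KrullDimLE.exists_sq_mul_eq [IsReduced R] [Ring.KrullDimLE 0 R] (x : R) :
    ∃ y, x ^ 2 * y = x := by
  suffices span {x} ⊔ (⊥ : Ideal R).colon (span {x}) = ⊤ by
    obtain ⟨a, ha, b, hb, hab⟩ := Submodule.mem_sup.mp (this ▸ Submodule.mem_top : (1 : R) ∈ _)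
    obtain ⟨y, rfl⟩ := mem_span_singleton'.mp ha
    have hbx : b * x = 0 := mem_colon_span_singleton.mp hb
    exact ⟨y, by linear_combination x * hab - hbx⟩
  by_contra hne
  obtain ⟨m, hm, hle⟩ := exists_le_maximal _ hne
  have hxm : x ∈ m := hle (mem_sup_left (mem_span_singleton_self x))
  -- `R_m` is local of dimension zero, so its maximal ideal is its nilradical, which is zero.
  have := Ring.KrullDimLE.of_isLocalization m (mem_minimalPrimes_of_krullDimLE_zero m)
    (Localization.AtPrime m)
  have hx0 : algebraMap R (Localization.AtPrime m) x = 0 := by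
    refine IsNilpotent.eq_zero ?_
    rw [← mem_nilradical, Ring.KrullDimLE.nilradical_eq_maximalIdeal,
      IsLocalization.AtPrime.to_map_mem_maximal_iff _ m]
    exact hxm
  obtain ⟨s, hs⟩ := (IsLocalization.map_eq_zero_iff m.primeCompl _ x).mp hx0
  exact s.2 (hle (mem_sup_right (mem_colon_span_singleton.mpr hs)))

theorem Ring.krullDimLE_zero_iff_forall_exists_sq_mul_eq [IsReduced R] :
    Ring.KrullDimLE 0 R ↔ ∀ x : R, ∃ y, x ^ 2 * y = x :=
  ⟨fun _ ↦ Ring.KrullDimLE.exists_sq_mul_eq, Ring.krullDimLE_zero_of_forall_exists_sq_mul_eq⟩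

theorem Ideal.krullDimLE_zero_quotient_iff {I : Ideal R} :
    Ring.KrullDimLE 0 (R ⧸ I) ↔ ∀ p : Ideal R, p.IsPrime → I ≤ p → p.IsMaximal := by
  rw [krullDimLE_zero_quotient_iff_forall_minimalPrimes_isMaximal]
  refine ⟨fun h p hp hIp ↦ ?_, fun h q hq ↦ h q hq.1.1 hq.1.2⟩
  obtain ⟨q, hq, hqp⟩ := exists_minimalPrimes_le hIp
  exact (h q hq).eq_of_le hp.ne_top hqp ▸ h q hq

theorem Ideal.forall_exists_sq_mul_sub_mem_iff_quotient {I : Ideal R} :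
    (∀ x : R, ∃ y, x ^ 2 * y - x ∈ I) ↔ ∀ x : R ⧸ I, ∃ y, x ^ 2 * y = x := by
  simp only [Quotient.mk_surjective.forall, Quotient.mk_surjective.exists, ← map_pow, ← map_mul,
    Quotient.eq]

theorem Ideal.IsRadical.forall_exists_sq_mul_sub_mem_iff {I : Ideal R} (hI : I.IsRadical) :
    (∀ x : R, ∃ y, x ^ 2 * y - x ∈ I) ↔ ∀ p : Ideal R, p.IsPrime → I ≤ p → p.IsMaximal := by
  have := (isRadical_iff_quotient_reduced I).mp hI
  rw [forall_exists_sq_mul_sub_mem_iff_quotient,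
    ← Ring.krullDimLE_zero_iff_forall_exists_sq_mul_eq, krullDimLE_zero_quotient_iff]

theorem PrimeSpectrum.vanishingIdeal_setOf_isMaximal :
    vanishingIdeal {p : PrimeSpectrum R | p.asIdeal.IsMaximal} = jacobson ⊥ := by
  ext x
  simp only [mem_vanishingIdeal, jacobson, mem_sInf]
  exact ⟨fun h m hm ↦ h ⟨m, hm.2.isPrime⟩ hm.2, fun h p hp ↦ h ⟨bot_le, hp⟩⟩

theorem PrimeSpectrum.isClosed_setOf_isMaximal_iff :
    IsClosed {p : PrimeSpectrum R | p.asIdeal.IsMaximal} ↔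
      ∀ p : Ideal R, p.IsPrime → jacobson ⊥ ≤ p → p.IsMaximal := by
  rw [← closure_subset_iff_isClosed, ← zeroLocus_vanishingIdeal_eq_closure,
    vanishingIdeal_setOf_isMaximal]
  exact ⟨fun h p hp hJp ↦ h (a := ⟨p, hp⟩) hJp, fun h q hq ↦ h q.asIdeal q.isPrime hq⟩

theorem exists_mul_mem_jacobson_and_isUnit_add {x y : R} (h : x ^ 2 * y - x ∈ jacobson ⊥) :
    ∃ z, x * z ∈ jacobson ⊥ ∧ IsUnit (x + z) := by
  have hxz : x * (1 - x * y) = -(x ^ 2 * y - x) := by ring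
  refine ⟨1 - x * y, hxz ▸ neg_mem h, ?_⟩
  -- Modulo `J`, `e = x * y` is idempotent, `x * e = x`, and `e * y + 1 - e` inverts `x + 1 - e`.
  refine isUnit_of_mul_isUnit_left (y := x * y ^ 2 + 1 - x * y)
    (isUnit_of_sub_one_mem_jacobson_bot _ ?_)
  have : (x + (1 - x * y)) * (x * y ^ 2 + 1 - x * y) - 1 = -(1 - y) ^ 2 * (x ^ 2 * y - x) := by
    ring
  exact this ▸ mul_mem_left _ _ h

theorem exists_sq_mul_sub_mem_of_mul_mem_of_isUnit_add {I : Ideal R} {x y : R} (hxy : x * y ∈ I)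
    (hu : IsUnit (x + y)) : ∃ z, x ^ 2 * z - x ∈ I := by
  obtain ⟨u, hu⟩ := hu
  refine ⟨↑u⁻¹, ?_⟩
  have : x ^ 2 * ↑u⁻¹ - x = -(x * y * ↑u⁻¹) := by
    linear_combination x * u.mul_inv - (x * ↑u⁻¹) * hu
  exact this ▸ neg_mem (mul_mem_right _ _ hxy)

end

theorem J_regular_characterizations {R : Type*} [CommRing R] :
    -- (1) ↔ (2)
    ((∀ x : R, ∃ y : R, x ^ 2 * y - x ∈ Ideal.jacobson (⊥ : Ideal R)) ↔
      IsClosed {p : PrimeSpectrum R | p.asIdeal.IsMaximal}) ∧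
    -- (1) ↔ (3)
    ((∀ x : R, ∃ y : R, x ^ 2 * y - x ∈ Ideal.jacobson (⊥ : Ideal R)) ↔
      ∀ x : R, ∃ y : R, x * y ∈ Ideal.jacobson (⊥ : Ideal R) ∧ IsUnit (x + y)) := by
  refine ⟨?_, fun h x ↦ ?_, fun h x ↦ ?_⟩
  · rw [(isRadical_jacobson ⊥).forall_exists_sq_mul_sub_mem_iff,
      PrimeSpectrum.isClosed_setOf_isMaximal_iff]
  · obtain ⟨y, hy⟩ := h x
    exact exists_mul_mem_jacobson_and_isUnit_add hy
  · obtain ⟨y, hxy, hu⟩ := h x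
    exact exists_sq_mul_sub_mem_of_mul_mem_of_isUnit_add hxy hu
end

section
/- Let R ⊆ S be an integral extension of commutative rings such that the induced map Spec(S) → Spec(R) (sending a prime ideal of S to its contraction to R) is injective (an i-extension). Then R is J-regular if and only if S is J-regular. -/
/-!
A ring `R` is J-regular exactly when every prime ideal containing `J(R)` is maximal: `R/J(R)` is
reduced, and a reduced ring is von Neumann regular iff it has dimension zero. Along an integral
extension `R ⊆ S`, lying over and going up show that `J(S)` contracts to `J(R)`, and contraction
of primes preserves and reflects maximality. So the primes of `S` above `J(S)` contract onto the
primes of `R` above `J(R)`, and one family consists of maximal ideals iff the other does.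
-/

/-- A commutative ring `R` is *J-regular* if `R/J(R)` is von Neumann regular, i.e.
for every `x ∈ R` there exists `y` with `x²y − x ∈ J(R)`. -/
def IsJRegular (R : Type*) [CommRing R] : Prop :=
  ∀ x : R, ∃ y : R, x ^ 2 * y - x ∈ Ideal.jacobson (⊥ : Ideal R)

namespace Ideal

section CommRing

variable {R : Type*} [CommRing R]

theorem IsRadical.exists_notMem_mul_mem_of_mem_minimalPrimes {I p : Ideal R} (hI : I.IsRadical)
    (hp : p ∈ I.minimalPrimes) {x : R} (hx : x ∈ p) : ∃ y ∉ p, x * y ∈ I := by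
  have : p.IsPrime := hp.1.1
  by_contra! h
  have hdisj : Disjoint (I : Set R) (p.primeCompl ⊔ Submonoid.powers x : Submonoid R) := by
    refine Set.disjoint_left.2 fun a haI haT ↦ ?_
    obtain ⟨u, hu, _, ⟨n, rfl⟩, rfl⟩ := Submonoid.mem_sup.1 haT
    have : (x * u) ^ (n + 1) ∈ I := by
      rw [show (x * u) ^ (n + 1) = x * u ^ n * (u * x ^ n) by ring]
      exact I.mul_mem_left _ haI
    exact h u hu (hI ⟨n + 1, this⟩)
  -- A prime above `I` avoiding `p.primeCompl ⊔ powers x` lies below `p` but misses `x`.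
  obtain ⟨q, hq, hIq, hqT⟩ := exists_le_prime_disjoint I _ hdisj
  have hqp : q ≤ p := fun a haq ↦ by_contra fun hap ↦
    Set.disjoint_left.1 hqT haq (le_sup_left (a := p.primeCompl) hap)
  have hpq : p ≤ q := hp.2 ⟨hq, hIq⟩ hqp
  exact Set.disjoint_left.1 hqT (hpq hx) (le_sup_right (b := Submonoid.powers x) ⟨1, pow_one x⟩)

theorem IsPrime.isMaximal_of_le_of_forall_exists_sq_mul_sub_mem {J P : Ideal R}
    (hP : P.IsPrime) (hJP : J ≤ P) (h : ∀ x : R, ∃ y : R, x ^ 2 * y - x ∈ J) :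
    P.IsMaximal := by
  refine isMaximal_iff.2
    ⟨fun h1 ↦ hP.ne_top ((eq_top_iff_one P).2 h1), fun I x hPI hxP hxI ↦ ?_⟩
  obtain ⟨y, hy⟩ := h x
  have : x * (x * y - 1) ∈ P := hJP (by convert hy using 1; ring)
  have hxy : x * y - 1 ∈ I := hPI ((hP.mem_or_mem this).resolve_left hxP)
  simpa using I.sub_mem (I.mul_mem_right y hxI) hxy

theorem IsRadical.exists_sq_mul_sub_mem {J : Ideal R} (hJ : J.IsRadical)
    (h : ∀ P : Ideal R, P.IsPrime → J ≤ P → P.IsMaximal) (x : R) :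
    ∃ y : R, x ^ 2 * y - x ∈ J := by
  set K := span {x ^ 2} ⊔ J.colon (span {x})
  have hJK : J ≤ K :=
    le_sup_of_le_right fun j hj ↦ mem_colon_span_singleton.2 (J.mul_mem_right x hj)
  -- A maximal ideal above `K` would be a minimal prime over `J` containing both `x` and
  -- an element outside it that kills `x` modulo `J`.
  have hK : K = ⊤ := by
    by_contra hK
    obtain ⟨P, hPmax, hKP⟩ := exists_le_maximal K hK
    obtain ⟨p, hp, hpP_le⟩ := exists_minimalPrimes_le (hJK.trans hKP)
    have hpP : p = P := (h p hp.1.1 hp.1.2).eq_of_le hPmax.ne_top hpP_le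
    have hxP : x ∈ P :=
      hPmax.isPrime.mem_of_pow_mem 2 (hKP (mem_sup_left (mem_span_singleton_self _)))
    obtain ⟨y, hyP, hxy⟩ := hJ.exists_notMem_mul_mem_of_mem_minimalPrimes (hpP ▸ hp) hxP
    exact hyP (hKP (mem_sup_right (mem_colon_span_singleton.2 (by rwa [mul_comm]))))
  obtain ⟨a, ha, b, hb, hab⟩ := Submodule.mem_sup.1 (hK ▸ Submodule.mem_top : (1 : R) ∈ K)
  obtain ⟨c, rfl⟩ := mem_span_singleton'.1 ha
  refine ⟨c * x, ?_⟩
  rw [show x ^ 2 * (c * x) - x = -(b * x) by linear_combination x * hab]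
  exact J.neg_mem (mem_colon_span_singleton.1 hb)

end CommRing

theorem comap_jacobson_of_isIntegral {R S : Type*} [CommRing R] [CommRing S] [Algebra R S]
    [Algebra.IsIntegral R S] (I : Ideal S) :
    I.jacobson.comap (algebraMap R S) = (I.comap (algebraMap R S)).jacobson := by
  refine le_antisymm (fun r hr ↦ mem_sInf.2 ?_) (fun r hr ↦ mem_sInf.2 ?_)
  · rintro m ⟨hIm, hm⟩
    obtain ⟨n, hIn, hn, rfl⟩ := exists_ideal_over_prime_of_isIntegral m I hIm
    exact mem_sInf.1 hr ⟨hIn, isMaximal_of_isIntegral_of_isMaximal_comap n hm⟩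
  · rintro n ⟨hIn, hn⟩
    exact mem_sInf.1 hr ⟨comap_mono hIn, isMaximal_comap_of_isIntegral_of_isMaximal n⟩

end Ideal

theorem isJRegular_iff_forall_isPrime_isMaximal (R : Type*) [CommRing R] :
    IsJRegular R ↔ ∀ P : Ideal R, P.IsPrime → Ideal.jacobson ⊥ ≤ P → P.IsMaximal :=
  ⟨fun h _ hP hJP ↦ hP.isMaximal_of_le_of_forall_exists_sq_mul_sub_mem hJP h,
    (Ideal.isRadical_jacobson ⊥).exists_sq_mul_sub_mem⟩

section IsIntegral

variable {R S : Type*} [CommRing R] [CommRing S] [Algebra R S] [Algebra.IsIntegral R S]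

theorem IsJRegular.of_isIntegral (hR : IsJRegular R) : IsJRegular S := by
  rw [isJRegular_iff_forall_isPrime_isMaximal] at hR ⊢
  intro Q hQ hJQ
  have hJ : Ideal.jacobson ⊥ ≤ Q.comap (algebraMap R S) :=
    calc Ideal.jacobson ⊥ ≤ ((⊥ : Ideal S).comap (algebraMap R S)).jacobson :=
          Ideal.jacobson_mono bot_le
      _ = (Ideal.jacobson ⊥).comap (algebraMap R S) :=
          (Ideal.comap_jacobson_of_isIntegral ⊥).symm
      _ ≤ Q.comap (algebraMap R S) := Ideal.comap_mono hJQ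
  exact Ideal.isMaximal_of_isIntegral_of_isMaximal_comap Q (hR _ (hQ.comap _) hJ)

theorem IsJRegular.of_isIntegral_of_injective (hf : Function.Injective (algebraMap R S))
    (hS : IsJRegular S) : IsJRegular R := by
  rw [isJRegular_iff_forall_isPrime_isMaximal] at hS ⊢
  intro P hP hJP
  have hJ : (Ideal.jacobson ⊥ : Ideal S).comap (algebraMap R S) ≤ P := by
    rwa [Ideal.comap_jacobson_of_isIntegral, ← RingHom.ker_eq_comap_bot,
      (RingHom.injective_iff_ker_eq_bot _).1 hf]
  obtain ⟨Q, hJQ, hQ, rfl⟩ := Ideal.exists_ideal_over_prime_of_isIntegral P _ hJ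
  have := hS Q hQ hJQ
  exact Ideal.isMaximal_comap_of_isIntegral_of_isMaximal Q

end IsIntegral

theorem J_regular_transfers_along_integral_i_extensions_general
    {S : Type*} [CommRing S] (R : Subring S)
    (hint : ∀ x : S, IsIntegral R x) :
    IsJRegular R ↔ IsJRegular S :=
  have : Algebra.IsIntegral R S := ⟨hint⟩
  ⟨.of_isIntegral, .of_isIntegral_of_injective Subtype.val_injective⟩

theorem J_regular_transfers_along_integral_i_extensions
    {S : Type*} [CommRing S] (R : Subring S)
    (hint : ∀ x : S, IsIntegral R x)
    (hi : ∀ Q₁ Q₂ : Ideal S, Q₁.IsPrime → Q₂.IsPrime →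
      Q₁.comap R.subtype = Q₂.comap R.subtype → Q₁ = Q₂) :
    IsJRegular R ↔ IsJRegular S :=
  J_regular_transfers_along_integral_i_extensions_general R hint
end

section
/- Let R ⊆ S be a strongly local extension of commutative rings with S von Neumann regular. Then: R ⊆ S is an integral extension; R ⊆ S is seminormal; R ⊆ S is infra-integral — indeed for every prime ideal Q of S with P = Q ∩ R, the natural map R/P → S/Q is an isomorphism; the extension is quadratic, i.e., every x ∈ S satisfies x² = ux for some unit u of R; and R is von Neumann regular. -/
section Regular

variable {S : Type*} [CommRing S] {x y : S}

theorem add_one_sub_mul_mul_eq_one_of_sq_mul_eq (h : x ^ 2 * y = x) :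
    (x + 1 - x * y) * (x * y ^ 2 + 1 - x * y) = 1 := by
  linear_combination (2 * y - y ^ 2 - 1) * h

theorem sq_eq_add_one_sub_mul_mul_of_sq_mul_eq (h : x ^ 2 * y = x) :
    x ^ 2 = (x + 1 - x * y) * x := by
  linear_combination h

end Regular

theorem mul_sq_eq_of_mul_eq_one_of_sq_eq_mul {M : Type*} [CommMonoid M] {u w x : M}
    (hw : w * u = 1) (h : x ^ 2 = u * x) : w * x ^ 2 = x := by
  rw [h, ← mul_assoc, hw, one_mul]

theorem exists_sq_mul_eq_of_sq_eq_mul {M : Type*} [CommMonoid M] {u x : M} (hu : IsUnit u)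
    (h : x ^ 2 = u * x) : ∃ y, x ^ 2 * y = x := by
  obtain ⟨w, hw⟩ := hu.exists_left_inv
  exact ⟨w, mul_comm (x ^ 2) w ▸ mul_sq_eq_of_mul_eq_one_of_sq_eq_mul hw h⟩

theorem Subring.mem_of_sq_eq_mul_of_sq_mem {S : Type*} [CommRing S] {R : Subring S} {u : R}
    (hu : IsUnit u) {x : S} (h : x ^ 2 = u * x) (hx2 : x ^ 2 ∈ R) : x ∈ R := by
  obtain ⟨w, hw⟩ := hu.exists_left_inv
  rw [← mul_sq_eq_of_mul_eq_one_of_sq_eq_mul (congrArg Subtype.val hw) h]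
  exact R.mul_mem w.2 hx2

theorem isIntegral_of_sq_eq_algebraMap_mul {R A : Type*} [CommRing R] [Ring A] [Algebra R A]
    {x : A} (r : R) (h : x ^ 2 = algebraMap R A r * x) : IsIntegral R x := by
  refine ⟨Polynomial.X ^ 2 - Polynomial.C r * Polynomial.X, by monicity!, ?_⟩
  rw [← Polynomial.aeval_def]
  simp [h]

theorem Ideal.quotientMap_surjective_of_forall_sq_eq_mul {R S : Type*} [CommRing R] [CommRing S]
    {f : R →+* S} {Q : Ideal S} [Q.IsPrime] (h : ∀ x : S, ∃ r : R, x ^ 2 = f r * x) :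
    Function.Surjective (Ideal.quotientMap Q f le_rfl) := by
  intro z
  obtain ⟨x, rfl⟩ := Ideal.Quotient.mk_surjective z
  obtain ⟨r, hx⟩ := h x
  have hroot :
      Ideal.Quotient.mk Q x * (Ideal.Quotient.mk Q x - Ideal.Quotient.mk Q (f r)) = 0 := by
    rw [← map_sub, ← map_mul, mul_sub, ← sq, hx, mul_comm, sub_self, map_zero]
  rcases mul_eq_zero.mp hroot with hx0 | hxr
  · exact ⟨0, by rw [map_zero, hx0]⟩
  · exact ⟨Ideal.Quotient.mk _ r, by rw [Ideal.quotientMap_mk, sub_eq_zero.mp hxr]⟩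

namespace Subring.IsSLExt

variable {S : Type*} [CommRing S] {R : Subring S}

theorem exists_isUnit_eq_of_mul_eq_one (hSL : R.IsSLExt) {a b : S} (hab : a * b = 1) :
    ∃ u : R, IsUnit u ∧ (u : S) = a := by
  obtain ⟨ha, hb⟩ := hSL a b hab
  exact ⟨⟨a, ha⟩, IsUnit.of_mul_eq_one ⟨b, hb⟩ (Subtype.ext hab), rfl⟩

theorem exists_isUnit_sq_eq_mul (hSL : R.IsSLExt) {x y : S} (h : x ^ 2 * y = x) :
    ∃ u : R, IsUnit u ∧ x ^ 2 = (u : S) * x := by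
  obtain ⟨u, hu, hux⟩ := hSL.exists_isUnit_eq_of_mul_eq_one
    (add_one_sub_mul_mul_eq_one_of_sq_mul_eq h)
  exact ⟨u, hu, hux ▸ sq_eq_add_one_sub_mul_mul_of_sq_mul_eq h⟩

end Subring.IsSLExt

theorem SL_over_von_neumann_regular {S : Type*} [CommRing S] (R : Subring S)
    (hSL : R.IsSLExt)
    (hvnr : ∀ x : S, ∃ y : S, x ^ 2 * y = x) :
    -- `R ⊆ S` is integral
    (∀ x : S, IsIntegral R x) ∧
    -- `R ⊆ S` is seminormal
    (∀ b : S, b ^ 2 ∈ R → b ^ 3 ∈ R → b ∈ R) ∧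
    -- `R ⊆ S` is infra-integral: the maps `R/(Q ∩ R) → S/Q` are isomorphisms
    (∀ Q : Ideal S, Q.IsPrime →
      Function.Bijective (Ideal.quotientMap Q R.subtype le_rfl)) ∧
    -- the extension is quadratic: every `x ∈ S` satisfies `x² = u·x` for a unit `u` of `R`
    (∀ x : S, ∃ u : ↥R, IsUnit u ∧ x ^ 2 = (u : S) * x) ∧
    -- `R` is von Neumann regular
    (∀ x : ↥R, ∃ y : ↥R, x ^ 2 * y = x) := by
  have quadratic : ∀ x : S, ∃ u : ↥R, IsUnit u ∧ x ^ 2 = (u : S) * x := fun x ↦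
    hSL.exists_isUnit_sq_eq_mul (hvnr x).choose_spec
  refine ⟨fun x ↦ ?_, fun b hb2 _ ↦ ?_, fun Q _ ↦ ?_, quadratic, fun x ↦ ?_⟩
  · obtain ⟨u, -, hx⟩ := quadratic x
    exact isIntegral_of_sq_eq_algebraMap_mul u hx
  · obtain ⟨u, hu, hb⟩ := quadratic b
    exact R.mem_of_sq_eq_mul_of_sq_mem hu hb hb2
  · refine ⟨Ideal.quotientMap_injective, Ideal.quotientMap_surjective_of_forall_sq_eq_mul ?_⟩
    exact fun x ↦ (quadratic x).imp fun u hu ↦ hu.2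
  · obtain ⟨u, hu, hx⟩ := quadratic x
    exact exists_sq_mul_eq_of_sq_eq_mul hu (Subtype.ext hx)
end

section
/- Let R ⊆ S be a strongly local extension of commutative rings with S von Neumann regular. Then: (1) if the induced map Spec(S) → Spec(R) is injective, then R = S; (2) if R ⊆ S is u-closed (every b ∈ S with b² − b ∈ R and b³ − b² ∈ R lies in R), then R = S; (3) if 2 is a unit of S, then R = S. -/
theorem IsIdempotentElem.isIntegral {R A : Type*} [CommRing R] [Ring A] [Algebra R A] {e : A}
    (he : IsIdempotentElem e) : IsIntegral R e :=
  ⟨.X ^ 2 - .X, Polynomial.monic_X_pow_sub (Polynomial.degree_X_le.trans_lt (by norm_num)),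
    by simp [sq, he.eq]⟩

theorem exists_isUnit_isIdempotentElem_eq_add_sub_one {S : Type*} [CommRing S] {x y : S}
    (h : x ^ 2 * y = x) : ∃ u e : S, IsUnit u ∧ IsIdempotentElem e ∧ x = u + e - 1 := by
  refine ⟨x + 1 - x * y, x * y, IsUnit.of_mul_eq_one (x * y * y + 1 - x * y) ?_, ?_, by ring⟩
  · linear_combination (2 * y - y ^ 2 - 1) * h
  · exact (by linear_combination y * h : x * y * (x * y) = x * y)

section LyingOver

variable {R S : Type*} [CommRing R] [CommRing S] [Algebra R S] {e : S}

theorem IsIdempotentElem.mem_range_algebraMap_of_comap_span_sup_eq_top (he : IsIdempotentElem e)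
    (htop : (Ideal.span {e}).comap (algebraMap R S) ⊔ (Ideal.span {1 - e}).comap (algebraMap R S)
      = ⊤) : e ∈ (algebraMap R S).range := by
  obtain ⟨a, ha, b, hb, hab⟩ := Submodule.mem_sup.mp (htop ▸ Submodule.mem_top : (1 : R) ∈ _)
  rw [Ideal.mem_comap, Ideal.mem_span_singleton'] at ha hb
  obtain ⟨s, hs⟩ := ha
  obtain ⟨t, ht⟩ := hb
  have hab' : algebraMap R S a + algebraMap R S b = 1 := by rw [← map_add, hab, map_one]
  refine ⟨a, ?_⟩
  rw [← hs, ← ht] at hab'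
  rw [← hs]
  linear_combination (t - s) * he.eq + e * hab'

theorem IsIdempotentElem.mem_range_algebraMap_of_comap_injective [Algebra.IsIntegral R S]
    (hinj : ∀ Q₁ Q₂ : Ideal S, Q₁.IsPrime → Q₂.IsPrime →
      Q₁.comap (algebraMap R S) = Q₂.comap (algebraMap R S) → Q₁ = Q₂)
    (he : IsIdempotentElem e) : e ∈ (algebraMap R S).range := by
  by_contra he_not_mem
  obtain ⟨m, hm, hle⟩ := Ideal.exists_le_maximal _
    (mt he.mem_range_algebraMap_of_comap_span_sup_eq_top he_not_mem)
  obtain ⟨Q₁, heQ₁, hQ₁, hQ₁m⟩ :=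
    Ideal.exists_ideal_over_prime_of_isIntegral m _ (le_sup_left.trans hle)
  obtain ⟨Q₂, heQ₂, hQ₂, hQ₂m⟩ :=
    Ideal.exists_ideal_over_prime_of_isIntegral m _ (le_sup_right.trans hle)
  obtain rfl := hinj Q₁ Q₂ hQ₁ hQ₂ (hQ₁m.trans hQ₂m.symm)
  have hone : e + (1 - e) ∈ Q₁ := Q₁.add_mem (heQ₁ (Ideal.mem_span_singleton_self e))
    (heQ₂ (Ideal.mem_span_singleton_self _))
  exact hQ₁.ne_top ((Ideal.eq_top_iff_one _).mpr (by simpa using hone))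

end LyingOver

namespace Subring.IsSLExt

variable {S : Type*} [CommRing S] {R : Subring S}

theorem mem_of_isUnit (hSL : R.IsSLExt) {u : S} (hu : IsUnit u) : u ∈ R :=
  (hSL u _ hu.mul_val_inv).1

theorem eq_top_of_forall_isIdempotentElem_mem (hSL : R.IsSLExt)
    (hvnr : ∀ x : S, ∃ y : S, x ^ 2 * y = x) (hid : ∀ e : S, IsIdempotentElem e → e ∈ R) :
    R = ⊤ := by
  refine (Subring.eq_top_iff' R).mpr fun x ↦ ?_
  obtain ⟨y, hy⟩ := hvnr x
  obtain ⟨u, e, hu, he, rfl⟩ := exists_isUnit_isIdempotentElem_eq_add_sub_one hy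
  exact R.sub_mem (R.add_mem (hSL.mem_of_isUnit hu) (hid e he)) R.one_mem

theorem isIntegral (hSL : R.IsSLExt) (hvnr : ∀ x : S, ∃ y : S, x ^ 2 * y = x) :
    Algebra.IsIntegral R S := by
  refine ⟨fun x ↦ ?_⟩
  obtain ⟨y, hy⟩ := hvnr x
  obtain ⟨u, e, hu, he, rfl⟩ := exists_isUnit_isIdempotentElem_eq_add_sub_one hy
  have hu' : IsIntegral R u := isIntegral_algebraMap (x := (⟨u, hSL.mem_of_isUnit hu⟩ : R))
  exact (hu'.add he.isIntegral).sub isIntegral_one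

theorem isIdempotentElem_mem_of_isUnit_two (hSL : R.IsSLExt) (h2 : IsUnit (2 : S)) {e : S}
    (he : IsIdempotentElem e) : e ∈ R := by
  obtain ⟨w, hw⟩ := h2.exists_right_inv
  have hinv : (2 * e - 1) * (2 * e - 1) = 1 := by linear_combination 4 * he.eq
  have he_eq : e = w * (2 * e - 1 + 1) := by linear_combination (-e) * hw
  rw [he_eq]
  exact R.mul_mem (hSL 2 w hw).2 (R.add_mem (hSL _ _ hinv).1 R.one_mem)

end Subring.IsSLExt

theorem SL_over_von_neumann_regular_trivial_cases {S : Type*} [CommRing S] (R : Subring S)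
    (hSL : R.IsSLExt)
    (hvnr : ∀ x : S, ∃ y : S, x ^ 2 * y = x) :
    -- (1) if `Spec(S) → Spec(R)` is injective then `R = S`
    ((∀ Q₁ Q₂ : Ideal S, Q₁.IsPrime → Q₂.IsPrime →
        Q₁.comap R.subtype = Q₂.comap R.subtype → Q₁ = Q₂) → R = ⊤) ∧
    -- (2) if `R ⊆ S` is u-closed then `R = S`
    ((∀ b : S, b ^ 2 - b ∈ R → b ^ 3 - b ^ 2 ∈ R → b ∈ R) → R = ⊤) ∧
    -- (3) if `2` is a unit of `S` then `R = S`
    (IsUnit (2 : S) → R = ⊤) := by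
  refine ⟨fun hinj ↦ ?_, fun hclosed ↦ ?_, fun h2 ↦ ?_⟩ <;>
    refine hSL.eq_top_of_forall_isIdempotentElem_mem hvnr fun e he ↦ ?_
  · have := hSL.isIntegral hvnr
    exact R.range_subtype ▸ he.mem_range_algebraMap_of_comap_injective hinj
  · have hsq : e ^ 2 - e = 0 := by rw [he.pow_eq two_ne_zero, sub_self]
    have hcube : e ^ 3 - e ^ 2 = 0 := by
      rw [he.pow_eq three_ne_zero, he.pow_eq two_ne_zero, sub_self]
    exact hclosed e (hsq ▸ R.zero_mem) (hcube ▸ R.zero_mem)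
  · exact hSL.isIdempotentElem_mem_of_isUnit_two h2 he
end

section
/- A ring extension R ⊆ S of commutative rings is strongly local if and only if Nil(R) = Nil(S) (every nilpotent element of S lies in R) and the induced extension R/Nil(R) ⊆ S/Nil(S) of the reductions modulo the nilradicals is strongly local. -/
/-!
Strong locality says that every unit of `S` lies in `R`. Since `Nil(S)` lies in the Jacobson
radical, an element of `S` is a unit iff its class modulo `Nil(S)` is one. For nilpotent `n`, `1 + n`
is a unit, so strong locality forces `Nil(S) ⊆ R`; and once `Nil(S) ⊆ R`, an element whose class
modulo `Nil(S)` comes from `R` lies in `R` itself.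
-/

instance isLocalHom_mk_nilradical (S : Type*) [CommRing S] :
    IsLocalHom (Ideal.Quotient.mk (nilradical S)) :=
  isLocalHom_of_le_jacobson_bot _ (Ideal.jacobson_bot (R := S) ▸ nilradical_le_jacobson S)

namespace Subring

variable {S : Type*} [CommRing S]

theorem isSLExt_iff_forall_isUnit_mem (R : Subring S) :
    R.IsSLExt ↔ ∀ x : S, IsUnit x → x ∈ R := by
  refine ⟨fun h x hx ↦ ?_, fun h x y hxy ↦
    ⟨h x (.of_mul_eq_one y hxy), h y (.of_mul_eq_one_right x hxy)⟩⟩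
  obtain ⟨y, hxy⟩ := isUnit_iff_exists_inv.mp hx
  exact (h x y hxy).1

theorem mem_of_mk_mem_map {R : Subring S} {I : Ideal S} (hIR : ∀ x ∈ I, x ∈ R) {z : S}
    (hz : Ideal.Quotient.mk I z ∈ R.map (Ideal.Quotient.mk I)) : z ∈ R := by
  obtain ⟨r, hr, hrz⟩ := hz
  have hzr : z - r ∈ R := hIR _ (Ideal.Quotient.eq.mp hrz.symm)
  simpa using R.add_mem hzr hr

namespace IsSLExt

variable {R : Subring S}

theorem mem_of_isUnit_s14 (h : R.IsSLExt) {x : S} (hx : IsUnit x) : x ∈ R :=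
  (isSLExt_iff_forall_isUnit_mem R).mp h x hx

theorem mem_of_isNilpotent_s14 (h : R.IsSLExt) {x : S} (hx : IsNilpotent x) : x ∈ R := by
  simpa using R.sub_mem (h.mem_of_isUnit_s14 hx.isUnit_one_add) R.one_mem

theorem map_mk_nilradical (h : R.IsSLExt) : (R.map (Ideal.Quotient.mk (nilradical S))).IsSLExt := by
  refine (isSLExt_iff_forall_isUnit_mem _).mpr fun x hx ↦ ?_
  obtain ⟨a, rfl⟩ := Ideal.Quotient.mk_surjective x
  exact mem_map.mpr ⟨a, h.mem_of_isUnit_s14 (isUnit_of_map_unit _ a hx), rfl⟩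

theorem of_map_mk_nilradical (hnil : ∀ x : S, IsNilpotent x → x ∈ R)
    (h : (R.map (Ideal.Quotient.mk (nilradical S))).IsSLExt) : R.IsSLExt :=
  (isSLExt_iff_forall_isUnit_mem R).mpr fun _ hx ↦
    mem_of_mk_mem_map hnil (h.mem_of_isUnit_s14 (hx.map _))

end IsSLExt

end Subring

theorem SL_iff_SL_modulo_nilradical {S : Type*} [CommRing S] (R : Subring S) :
    R.IsSLExt ↔
      ((∀ x : S, IsNilpotent x → x ∈ R) ∧
        (R.map (Ideal.Quotient.mk (nilradical S))).IsSLExt) :=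
  ⟨fun h ↦ ⟨fun _ ↦ h.mem_of_isNilpotent_s14, h.map_mk_nilradical⟩,
    fun ⟨hnil, h⟩ ↦ Subring.IsSLExt.of_map_mk_nilradical hnil h⟩
end

section
/- Let I be a semiprime (radical) ideal of a commutative ring R, let a, b ∈ R be units of R, and let f(X), g(X) ∈ R[X] be polynomials such that a·f(X) + b·g(X) + X·f(X)·g(X) ∈ I[X], where I[X] denotes the ideal of R[X] of polynomials all of whose coefficients lie in I. Then f(X) ∈ I[X] and g(X) ∈ I[X]. -/
/-!
Reducing modulo `I`, the ring `R ⧸ I` is reduced and the claim becomes `f = g = 0` in `(R ⧸ I)[X]`.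
A reduced ring embeds coefficientwise into the product of its quotients by primes, so it suffices to
treat an integral domain. There, if `f` and `g` were both nonzero, `X * f * g` would have degree
`1 + deg f + deg g`, exceeding the degree of `a * f + b * g`; and if one of them vanishes, so does
the other because `a` and `b` are nonzero.
-/

open Polynomial

namespace Polynomial

variable {R : Type*} [CommRing R]

theorem mem_map_C_iff_map_mk_eq_zero {I : Ideal R} {f : R[X]} :
    f ∈ I.map (C : R →+* R[X]) ↔ f.map (Ideal.Quotient.mk I) = 0 := by
  rw [← coe_mapRingHom, ← RingHom.mem_ker, ker_mapRingHom, Ideal.mk_ker]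

theorem eq_zero_of_forall_map_mk_prime_eq_zero [IsReduced R] {f : R[X]}
    (hf : ∀ p : Ideal R, p.IsPrime → f.map (Ideal.Quotient.mk p) = 0) : f = 0 := by
  ext n
  have hmem : f.coeff n ∈ nilradical R := by
    rw [nilradical_eq_sInf, Ideal.mem_sInf]
    intro p hp
    rw [← Ideal.Quotient.eq_zero_iff_mem, ← coeff_map, hf p hp, coeff_zero]
  rwa [nilradical_eq_zero, Ideal.zero_eq_bot, Ideal.mem_bot] at hmem

theorem eq_zero_and_eq_zero_of_C_mul_add_C_mul_add_X_mul_mul_eq_zero_of_ne_zero [IsDomain R]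
    {a b : R} (ha : a ≠ 0) (hb : b ≠ 0) {f g : R[X]}
    (h : C a * f + C b * g + X * f * g = 0) : f = 0 ∧ g = 0 := by
  have hCa : (C a : R[X]) ≠ 0 := C_ne_zero.mpr ha
  have hCb : (C b : R[X]) ≠ 0 := C_ne_zero.mpr hb
  by_cases hf : f = 0
  · subst hf
    simp only [mul_zero, zero_mul, zero_add, add_zero, mul_eq_zero, hCb, false_or] at h
    exact ⟨rfl, h⟩
  by_cases hg : g = 0
  · subst hg
    simp only [mul_zero, add_zero, mul_eq_zero, hCa, false_or] at h
    exact ⟨h, rfl⟩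
  exfalso
  have hdeg_prod : (X * f * g).natDegree = 1 + f.natDegree + g.natDegree := by
    rw [natDegree_mul (mul_ne_zero X_ne_zero hf) hg, natDegree_mul X_ne_zero hf, natDegree_X]
  have hdeg_lin : (X * f * g).natDegree ≤ max f.natDegree g.natDegree := by
    rw [eq_neg_of_add_eq_zero_right h, natDegree_neg]
    calc (C a * f + C b * g).natDegree
        ≤ max (C a * f).natDegree (C b * g).natDegree := natDegree_add_le _ _
      _ = max f.natDegree g.natDegree := by rw [natDegree_C_mul ha, natDegree_C_mul hb]
  omega

theorem eq_zero_and_eq_zero_of_C_mul_add_C_mul_add_X_mul_mul_eq_zero [IsReduced R]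
    {a b : R} (ha : IsUnit a) (hb : IsUnit b) {f g : R[X]}
    (h : C a * f + C b * g + X * f * g = 0) : f = 0 ∧ g = 0 := by
  have hmod : ∀ p : Ideal R, p.IsPrime →
      f.map (Ideal.Quotient.mk p) = 0 ∧ g.map (Ideal.Quotient.mk p) = 0 := by
    intro p hp
    have hmap := congrArg (Polynomial.map (Ideal.Quotient.mk p)) h
    simp only [Polynomial.map_add, Polynomial.map_mul, map_C, map_X, Polynomial.map_zero] at hmap
    exact eq_zero_and_eq_zero_of_C_mul_add_C_mul_add_X_mul_mul_eq_zero_of_ne_zero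
      (ha.map _).ne_zero (hb.map _).ne_zero hmap
  exact ⟨eq_zero_of_forall_map_mk_prime_eq_zero fun p hp => (hmod p hp).1,
    eq_zero_of_forall_map_mk_prime_eq_zero fun p hp => (hmod p hp).2⟩

end Polynomial

theorem cohn_lemma_on_radical_ideals {R : Type*} [CommRing R] (I : Ideal R)
    (hI : I.IsRadical) (a b : R) (ha : IsUnit a) (hb : IsUnit b)
    (f g : Polynomial R)
    (h : C a * f + C b * g + X * f * g ∈ I.map (C : R →+* Polynomial R)) :
    f ∈ I.map (C : R →+* Polynomial R) ∧ g ∈ I.map (C : R →+* Polynomial R) := by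
  have : IsReduced (R ⧸ I) := (Ideal.isRadical_iff_quotient_reduced I).mp hI
  simp only [mem_map_C_iff_map_mk_eq_zero, Polynomial.map_add, Polynomial.map_mul, map_C,
    map_X] at h ⊢
  exact eq_zero_and_eq_zero_of_C_mul_add_C_mul_add_X_mul_mul_eq_zero (ha.map _) (hb.map _) h
end

section
/- For every commutative ring R there exist a commutative ring S and an injective ring homomorphism f : R → S such that: f is strongly local (f(U(R)) = U(S)); every non-unit of S is a zero divisor of S; the extension f(R) ⊆ S is t-closed (every y ∈ S for which there exists r ∈ R with y² − f(r)·y ∈ f(R) and y³ − f(r)·y² ∈ f(R) lies in f(R)); and if R is reduced then S is reduced. -/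
/-!
For a ring `T`, let `AdjoinAnnihilators T` be the image of `T[X_a : a ∉ U(T)]` in
`T × ∏_p (T/p)[X_a]`, where the first component evaluates at `0` and the component at a prime `p`
sends `X_a` to `X_a` if `a ∈ p` and to `0` otherwise. Then `a X_a = 0` in every component, while
`X_a ≠ 0` survives at a maximal ideal containing `a`: every nonunit of `T` becomes a zero divisor.
The components at primes are polynomial rings over domains, whose units are constant and whose
constants form a t-closed subring; an element whose prime components are all constant comes from
`T` (evaluate at `0`). Hence `T → AdjoinAnnihilators T` is injective, strongly local and t-closed.
Iterating countably often, these properties pass to the direct limit, in which every nonunit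
already lives at a finite stage and is killed at the next one.
-/

universe u

open MvPolynomial CategoryTheory

section StronglyLocalTClosed

variable {R S T : Type*} [CommRing R] [CommRing S] [CommRing T]

/-- `f(U(R)) = U(S)`, stated as the nontrivial inclusion `U(S) ⊆ f(U(R))`
(see `IsStronglyLocal.image_isUnit`). -/
def IsStronglyLocal (f : R →+* S) : Prop :=
  ∀ ⦃y : S⦄, IsUnit y → ∃ x, IsUnit x ∧ f x = y

def IsTClosed (f : R →+* S) : Prop :=
  ∀ ⦃y : S⦄ (r : R), y ^ 2 - f r * y ∈ Set.range f → y ^ 3 - f r * y ^ 2 ∈ Set.range f →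
    y ∈ Set.range f

theorem IsStronglyLocal.image_isUnit {f : R →+* S} (hf : IsStronglyLocal f) :
    f '' {x | IsUnit x} = {y | IsUnit y} :=
  Set.Subset.antisymm (Set.image_subset_iff.mpr fun _ hx => hx.map f) fun _ hy => hf hy

theorem IsStronglyLocal.comp {g : S →+* T} {f : R →+* S} (hg : IsStronglyLocal g)
    (hf : IsStronglyLocal f) : IsStronglyLocal (g.comp f) := by
  intro z hz
  obtain ⟨y, hy, rfl⟩ := hg hz
  obtain ⟨x, hx, rfl⟩ := hf hy
  exact ⟨x, hx, rfl⟩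

theorem IsTClosed.comp {g : S →+* T} {f : R →+* S} (hg : IsTClosed g) (hf : IsTClosed f)
    (hg_inj : Function.Injective g) : IsTClosed (g.comp f) := by
  rintro z r ⟨s, hs⟩ ⟨t, ht⟩
  obtain ⟨y, rfl⟩ := hg (f r) ⟨f s, hs⟩ ⟨f t, ht⟩
  obtain ⟨x, rfl⟩ := hf r ⟨s, hg_inj (by simpa using hs)⟩ ⟨t, hg_inj (by simpa using ht)⟩
  exact ⟨x, rfl⟩

end StronglyLocalTClosed

namespace MvPolynomial

variable {σ A : Type*} [CommRing A]

theorem isStronglyLocal_C [IsReduced A] : IsStronglyLocal (C : A →+* MvPolynomial σ A) :=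
  fun _ hy => (isUnit_iff_eq_C_of_isReduced.mp hy).imp fun _ h => ⟨h.1, h.2.symm⟩

theorem mem_range_C_of_C_mul_eq_C [IsDomain A] {y : MvPolynomial σ A} {s t : A} (hs : s ≠ 0)
    (h : C s * y = C t) : y ∈ Set.range (C : A →+* MvPolynomial σ A) := by
  rcases eq_or_ne y 0 with rfl | hy
  · exact ⟨0, map_zero C⟩
  refine ⟨coeff 0 y, (totalDegree_eq_zero_iff_eq_C.mp ?_).symm⟩
  have := congrArg totalDegree h
  rwa [totalDegree_mul_of_isDomain (C_ne_zero.mpr hs) hy, totalDegree_C, totalDegree_C,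
    zero_add] at this

/-- If `y² - ry = s` and `y³ - ry² = t` then `sy = t`, so `y` is a constant unless `s = 0`,
in which case `y(y - r) = 0`. -/
theorem isTClosed_C [IsDomain A] : IsTClosed (C : A →+* MvPolynomial σ A) := by
  rintro y r ⟨s, hs⟩ ⟨t, ht⟩
  rcases eq_or_ne s 0 with rfl | hs0
  · have : y * (y - C r) = 0 := by rw [map_zero] at hs; linear_combination -hs
    rcases mul_eq_zero.mp this with rfl | h
    · exact ⟨0, map_zero C⟩
    · exact ⟨r, (sub_eq_zero.mp h).symm⟩
  · exact mem_range_C_of_C_mul_eq_C (t := t) hs0 (by linear_combination y * hs - ht)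

end MvPolynomial

noncomputable section AdjoinAnnihilators

variable {T : Type*} [CommRing T]

namespace AdjoinAnnihilators

open scoped Classical in
def primeComponent (p : PrimeSpectrum T) :
    MvPolynomial {a : T // ¬IsUnit a} T →+* MvPolynomial {a : T // ¬IsUnit a} (T ⧸ p.asIdeal) :=
  eval₂Hom (C.comp (Ideal.Quotient.mk p.asIdeal)) fun a => if a.1 ∈ p.asIdeal then X a else 0

@[simp] theorem primeComponent_C (p : PrimeSpectrum T) (t : T) :
    primeComponent p (C t) = C (Ideal.Quotient.mk p.asIdeal t) :=
  eval₂Hom_C _ _ _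

theorem primeComponent_X_of_mem {p : PrimeSpectrum T} {a : {a : T // ¬IsUnit a}}
    (h : a.1 ∈ p.asIdeal) : primeComponent p (X a) = X a := by
  simp [primeComponent, h]

theorem primeComponent_X_of_notMem {p : PrimeSpectrum T} {a : {a : T // ¬IsUnit a}}
    (h : a.1 ∉ p.asIdeal) : primeComponent p (X a) = 0 := by
  simp [primeComponent, h]

theorem eval_zero_primeComponent (p : PrimeSpectrum T) (f : MvPolynomial {a : T // ¬IsUnit a} T) :
    eval 0 (primeComponent p f) = Ideal.Quotient.mk p.asIdeal (eval 0 f) := by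
  induction f using MvPolynomial.induction_on with
  | C t => simp
  | add f g hf hg => simp_all
  | mul_X f a hf =>
    by_cases h : a.1 ∈ p.asIdeal
    · simp [primeComponent_X_of_mem h]
    · simp [primeComponent_X_of_notMem h]

variable (T) in
def embedding : MvPolynomial {a : T // ¬IsUnit a} T →+*
    T × ((p : PrimeSpectrum T) → MvPolynomial {a : T // ¬IsUnit a} (T ⧸ p.asIdeal)) :=
  (eval 0).prod (RingHom.pi primeComponent)

end AdjoinAnnihilators

variable (T) in
abbrev AdjoinAnnihilators : Type _ := (AdjoinAnnihilators.embedding T).range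

namespace AdjoinAnnihilators

def mk : MvPolynomial {a : T // ¬IsUnit a} T →+* AdjoinAnnihilators T :=
  (embedding T).rangeRestrict

def of : T →+* AdjoinAnnihilators T := mk.comp C

def fst : AdjoinAnnihilators T →+* T := (RingHom.fst _ _).comp (Subring.subtype _)

def proj (p : PrimeSpectrum T) :
    AdjoinAnnihilators T →+* MvPolynomial {a : T // ¬IsUnit a} (T ⧸ p.asIdeal) :=
  (Pi.evalRingHom (fun p : PrimeSpectrum T => MvPolynomial _ (T ⧸ p.asIdeal)) p).comp
    ((RingHom.snd _ _).comp (Subring.subtype _))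

def annihilator (a : T) (ha : ¬IsUnit a) : AdjoinAnnihilators T := mk (X ⟨a, ha⟩)

theorem mk_surjective : Function.Surjective (mk : _ →+* AdjoinAnnihilators T) :=
  RingHom.rangeRestrict_surjective _

@[simp] theorem fst_mk (f : MvPolynomial {a : T // ¬IsUnit a} T) : fst (mk f) = eval 0 f := rfl

@[simp] theorem proj_mk (p : PrimeSpectrum T) (f : MvPolynomial {a : T // ¬IsUnit a} T) :
    proj p (mk f) = primeComponent p f := rfl

@[simp] theorem fst_of (t : T) : fst (of t) = t := by simp [of]

@[simp] theorem proj_of (p : PrimeSpectrum T) (t : T) :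
    proj p (of t) = C (Ideal.Quotient.mk p.asIdeal t) := by
  simp [of]

theorem of_injective : Function.Injective (of : T →+* AdjoinAnnihilators T) :=
  Function.LeftInverse.injective fst_of

@[ext] theorem ext {y z : AdjoinAnnihilators T} (h : fst y = fst z)
    (h' : ∀ p, proj p y = proj p z) : y = z :=
  Subtype.ext (Prod.ext h (funext h'))

theorem eval_zero_proj (p : PrimeSpectrum T) (y : AdjoinAnnihilators T) :
    eval 0 (proj p y) = Ideal.Quotient.mk p.asIdeal (fst y) := by
  obtain ⟨f, rfl⟩ := mk_surjective y
  exact eval_zero_primeComponent p f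

theorem of_fst_of_forall_proj_mem_range {y : AdjoinAnnihilators T}
    (h : ∀ p, proj p y ∈ Set.range C) : of (fst y) = y := by
  ext p
  · exact fst_of _
  · obtain ⟨c, hc⟩ := h p
    rw [proj_of, ← eval_zero_proj, ← hc, eval_C]

theorem isStronglyLocal_of : IsStronglyLocal (of : T →+* AdjoinAnnihilators T) := by
  intro y hy
  refine ⟨fst y, hy.map fst, of_fst_of_forall_proj_mem_range fun p => ?_⟩
  obtain ⟨c, -, hc⟩ := isStronglyLocal_C (hy.map (proj p))
  exact ⟨c, hc⟩

theorem isTClosed_of : IsTClosed (of : T →+* AdjoinAnnihilators T) := by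
  intro y r hs ht
  have proj_mem : ∀ p {z}, z ∈ Set.range (of : T →+* _) → proj p z ∈ Set.range C := by
    rintro p _ ⟨w, rfl⟩
    exact ⟨_, (proj_of p w).symm⟩
  refine ⟨fst y, of_fst_of_forall_proj_mem_range fun p => ?_⟩
  have hs' := proj_mem p hs
  have ht' := proj_mem p ht
  simp only [map_sub, map_mul, map_pow, proj_of] at hs' ht'
  exact isTClosed_C _ hs' ht'

theorem of_mul_annihilator {a : T} (ha : ¬IsUnit a) : of a * annihilator a ha = 0 := by
  ext p
  · simp [of, annihilator]
  · by_cases hap : a ∈ p.asIdeal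
    · simp [of, annihilator, Ideal.Quotient.eq_zero_iff_mem.mpr hap]
    · simp [of, annihilator, primeComponent_X_of_notMem (a := ⟨a, ha⟩) hap]

theorem annihilator_ne_zero {a : T} (ha : ¬IsUnit a) : annihilator a ha ≠ 0 := by
  obtain ⟨m, hm, ham⟩ := exists_max_ideal_of_mem_nonunits ha
  intro h
  have := congrArg (proj ⟨m, hm.isPrime⟩) h
  rw [annihilator, proj_mk, primeComponent_X_of_mem (a := ⟨a, ha⟩) ham, map_zero] at this
  exact X_ne_zero _ this

instance [IsReduced T] : IsReduced (AdjoinAnnihilators T) :=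
  isReduced_of_injective (Subring.subtype _) Subtype.val_injective

end AdjoinAnnihilators

end AdjoinAnnihilators

namespace Ring.DirectLimit

variable {ι : Type*} [Preorder ι] [IsDirectedOrder ι] {G : ι → Type*} [∀ i, CommRing (G i)]

theorem exists_of_of_le {f : ∀ i j, i ≤ j → G i → G j} (i : ι) (z : DirectLimit G f) :
    ∃ j, i ≤ j ∧ ∃ x : G j, of G f j x = z := by
  have : Nonempty ι := ⟨i⟩
  obtain ⟨j, x, rfl⟩ := exists_of z
  obtain ⟨k, hik, hjk⟩ := directed_of (· ≤ ·) i j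
  exact ⟨k, hik, f j k hjk x, of_f hjk x⟩

variable {f : ∀ i j, i ≤ j → G i →+* G j} [DirectedSystem G (f · · ·)]

theorem isStronglyLocal_of (hf : ∀ i j h, Function.Injective (f i j h)) {i : ι}
    (hi : ∀ j h, IsStronglyLocal (f i j h)) : IsStronglyLocal (of G (f · · ·) i) := by
  intro y hy
  obtain ⟨v, hv⟩ := hy.exists_right_inv
  obtain ⟨j, hij, x, rfl⟩ := exists_of_of_le i y
  obtain ⟨k, hjk, w, rfl⟩ := exists_of_of_le j v
  rw [← of_f hjk x, ← map_mul, ← map_one (of G (f · · ·) k)] at hv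
  obtain ⟨u, hu, hux⟩ := hi k (hij.trans hjk) (.of_mul_eq_one _ (of_injective f hf k hv))
  exact ⟨u, hu, by rw [← of_f (hij.trans hjk), hux, of_f]⟩

theorem isTClosed_of (hf : ∀ i j h, Function.Injective (f i j h)) {i : ι}
    (hi : ∀ j h, IsTClosed (f i j h)) : IsTClosed (of G (f · · ·) i) := by
  rintro y r ⟨s, hs⟩ ⟨t, ht⟩
  obtain ⟨j, hij, x, rfl⟩ := exists_of_of_le i y
  simp only [← of_f hij, ← map_pow, ← map_mul, ← map_sub] at hs ht
  obtain ⟨w, hw⟩ := hi j hij r ⟨s, of_injective f hf j hs⟩ ⟨t, of_injective f hf j ht⟩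
  exact ⟨w, by rw [← of_f hij, hw]⟩

theorem exists_ne_zero_mul_eq_zero_of_not_isUnit [Nonempty ι]
    (hf : ∀ i j h, Function.Injective (f i j h))
    (hzd : ∀ i (x : G i), ¬IsUnit x → ∃ j h, ∃ t : G j, t ≠ 0 ∧ f i j h x * t = 0)
    {z : DirectLimit G (f · · ·)} (hz : ¬IsUnit z) :
    ∃ w, w ≠ 0 ∧ z * w = 0 := by
  obtain ⟨i, x, rfl⟩ := exists_of z
  obtain ⟨j, hij, t, ht0, hxt⟩ := hzd i x fun hx => hz (hx.map _)
  refine ⟨of G (f · · ·) j t, fun h => ht0 (of_injective f hf j (h.trans (map_zero _).symm)), ?_⟩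
  rw [← of_f hij x, ← map_mul, hxt, map_zero]

instance [Nonempty ι] [∀ i, IsReduced (G i)] : IsReduced (DirectLimit G (f · · ·)) where
  eq_zero z := by
    rintro ⟨n, hn⟩
    obtain ⟨i, x, rfl⟩ := exists_of z
    rw [← map_pow] at hn
    obtain ⟨j, hij, hx⟩ := of.zero_exact hn
    rw [map_pow] at hx
    rw [← of_f hij, eq_zero_of_pow_eq_zero hx, map_zero]

end Ring.DirectLimit

theorem CategoryTheory.Functor.ofSequence_map_homOfLE_mem {C : Type*} [Category C]
    (W : MorphismProperty C) [W.IsMultiplicative] {X : ℕ → C} {f : ∀ n, X n ⟶ X (n + 1)}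
    (hf : ∀ n, W (f n)) {i j : ℕ} (h : i ≤ j) : W ((ofSequence f).map (homOfLE h)) := by
  induction j, h using Nat.le_induction with
  | base => simpa using W.id_mem ((ofSequence f).obj i)
  | succ j hij ih =>
    rw [← homOfLE_comp hij j.le_succ, Functor.map_comp]
    refine W.comp_mem _ _ ih ?_
    rw [Functor.ofSequence_map_homOfLE_succ]
    exact hf j

instance CategoryTheory.Functor.directedSystem {ι : Type*} [Preorder ι] (F : ι ⥤ CommRingCat) :
    DirectedSystem (fun i => F.obj i) (fun _ _ h => (F.map (homOfLE h)).hom) where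
  map_self i x := by simp
  map_map _ _ _ hij hjk x := by
    rw [← CommRingCat.comp_apply, ← F.map_comp, homOfLE_comp]

def CommRingCat.stronglyLocalTClosedEmbeddings : MorphismProperty CommRingCat :=
  fun _ _ φ => Function.Injective φ.hom ∧ IsStronglyLocal φ.hom ∧ IsTClosed φ.hom

instance : CommRingCat.stronglyLocalTClosedEmbeddings.IsMultiplicative where
  id_mem _ := ⟨fun _ _ h => h, fun y hy => ⟨y, hy, rfl⟩, fun y _ _ _ => ⟨y, rfl⟩⟩
  comp_mem _ _ hf hg := ⟨hg.1.comp hf.1, hg.2.1.comp hf.2.1, hg.2.2.comp hf.2.2 hg.1⟩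

noncomputable section Tower

namespace AdjoinAnnihilators

variable (R : Type u) [CommRing R]

def tower : ℕ → CommRingCat.{u}
  | 0 => CommRingCat.of R
  | n + 1 => CommRingCat.of (AdjoinAnnihilators (tower n))

def towerFunctor : ℕ ⥤ CommRingCat.{u} :=
  Functor.ofSequence fun n => CommRingCat.ofHom (of : tower R n →+* tower R (n + 1))

abbrev limit : Type u :=
  Ring.DirectLimit (fun n => (towerFunctor R).obj n)
    (fun _ _ h => ((towerFunctor R).map (homOfLE h)).hom)

def toLimit : R →+* limit R :=
  Ring.DirectLimit.of (fun n => (towerFunctor R).obj n)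
    (fun _ _ h => ((towerFunctor R).map (homOfLE h)).hom) 0

variable {R}

theorem towerFunctor_map_mem {i j : ℕ} (h : i ≤ j) :
    CommRingCat.stronglyLocalTClosedEmbeddings ((towerFunctor R).map (homOfLE h)) :=
  Functor.ofSequence_map_homOfLE_mem _ (fun _ => ⟨of_injective, isStronglyLocal_of, isTClosed_of⟩) h

theorem toLimit_injective : Function.Injective (toLimit R) :=
  Ring.DirectLimit.of_injective _ (fun _ _ h => (towerFunctor_map_mem (R := R) h).1) 0

theorem isStronglyLocal_toLimit : IsStronglyLocal (toLimit R) :=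
  Ring.DirectLimit.isStronglyLocal_of (fun _ _ h => (towerFunctor_map_mem (R := R) h).1)
    fun _ h => (towerFunctor_map_mem h).2.1

theorem isTClosed_toLimit : IsTClosed (toLimit R) :=
  Ring.DirectLimit.isTClosed_of (fun _ _ h => (towerFunctor_map_mem (R := R) h).1)
    fun _ h => (towerFunctor_map_mem h).2.2

theorem exists_ne_zero_mul_eq_zero_of_not_isUnit {s : limit R} (hs : ¬IsUnit s) :
    ∃ t : limit R, t ≠ 0 ∧ s * t = 0 := by
  refine Ring.DirectLimit.exists_ne_zero_mul_eq_zero_of_not_isUnit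
    (fun _ _ h => (towerFunctor_map_mem (R := R) h).1) (fun n x hx => ?_) hs
  refine ⟨n + 1, n.le_succ, annihilator x hx, annihilator_ne_zero hx, ?_⟩
  simp only [towerFunctor, Functor.ofSequence_map_homOfLE_succ]
  exact of_mul_annihilator hx

instance [IsReduced R] (n : ℕ) : IsReduced ((towerFunctor R).obj n) := by
  induction n with
  | zero => assumption
  | succ n ih => exact inferInstanceAs (IsReduced (AdjoinAnnihilators ((towerFunctor R).obj n)))

end AdjoinAnnihilators

end Tower

theorem exists_SL_extension_nonunits_zerodivisors (R : Type u) [CommRing R] :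
    ∃ (S : Type u) (_ : CommRing S) (f : R →+* S),
      -- `f` is injective (an extension)
      Function.Injective f ∧
      -- `f` is strongly local: `f(U(R)) = U(S)`
      f '' {x : R | IsUnit x} = {y : S | IsUnit y} ∧
      -- every non-unit of `S` is a zero divisor of `S`
      (∀ s : S, ¬ IsUnit s → ∃ t : S, t ≠ 0 ∧ s * t = 0) ∧
      -- the extension `f(R) ⊆ S` is t-closed
      (∀ y : S, (∃ r : R, y ^ 2 - f r * y ∈ Set.range f ∧
          y ^ 3 - f r * y ^ 2 ∈ Set.range f) → y ∈ Set.range f) ∧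
      -- if `R` is reduced then so is `S`
      (IsReduced R → IsReduced S) := by
  open AdjoinAnnihilators in
  exact ⟨limit R, inferInstance, toLimit R, toLimit_injective, isStronglyLocal_toLimit.image_isUnit,
    fun _ => exists_ne_zero_mul_eq_zero_of_not_isUnit,
    fun _ ⟨r, hs, ht⟩ => isTClosed_toLimit r hs ht, fun _ => inferInstance⟩
end

section
/- Let R be a commutative ring and N a maximal ideal of the polynomial ring R[X]. The following are equivalent: (1) N ∩ R is a maximal ideal of R; (2) M[X] ⊆ N for some maximal ideal M of R, where M[X] is the ideal of R[X] of polynomials all of whose coefficients lie in M; (3) N contains a monic polynomial. Moreover, if these equivalent conditions hold, then N = M[X] + f(X)·R[X] for some monic polynomial f(X) ∈ N, and M = N ∩ R. -/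
/-!
If `N ∩ R` is maximal, then `N` strictly contains `(N ∩ R)[X]` (an extended ideal `I[X]` is never
maximal: the polynomials with constant term in `I` lie strictly between `I[X]` and `R[X]`), so the image of `N` in the
principal ideal domain `(R/(N ∩ R))[X]` is a nonzero ideal, generated by a monic polynomial; a monic
lift `f` of that generator gives `N = (N ∩ R)[X] + (f)`. Conversely, a monic `f ∈ N` makes the field
`R[X]/N` integral over `R/(N ∩ R)`, which is then a field too.
-/

open Polynomial

namespace Polynomial

variable {R : Type*} [CommRing R]

theorem not_isMaximal_map_C (I : Ideal R) : ¬(I.map (C : R →+* R[X])).IsMaximal := by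
  intro hmax
  have hI : I ≠ ⊤ := fun h => hmax.ne_top (by rw [h, Ideal.map_top])
  have hle : I.map C ≤ I.comap constantCoeff :=
    Ideal.map_le_iff_le_comap.2 fun r hr => by
      simpa only [Ideal.mem_comap, constantCoeff_apply, coeff_C_zero]
  have hX : (X : R[X]) ∈ I.comap constantCoeff := by
    simp only [Ideal.mem_comap, constantCoeff_apply, coeff_X_zero, Submodule.zero_mem]
  rw [← hmax.eq_of_le (Ideal.comap_ne_top _ hI) hle, Ideal.mem_map_C_iff] at hX
  exact hI ((Ideal.eq_top_iff_one I).2 (by simpa using hX 1))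

theorem map_comap_C_ne_of_isMaximal {N : Ideal R[X]} (hN : N.IsMaximal) :
    N ≠ (N.comap C).map C :=
  fun h => not_isMaximal_map_C (N.comap C) (h ▸ hN)

theorem Monic.isMaximal_comap_C {N : Ideal R[X]} [N.IsMaximal] {f : R[X]} (hf : f.Monic)
    (hfN : f ∈ N) : (N.comap (C : R →+* R[X])).IsMaximal := by
  let : Field (R[X] ⧸ N) := Ideal.Quotient.field N
  have := Ideal.isMaximal_comap_of_isIntegral_of_isMaximal' ((Ideal.Quotient.mk N).comp C)
    (hf.quotient_isIntegral hfN) ⊥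
  rwa [← Ideal.comap_comap, ← RingHom.ker, Ideal.mk_ker] at this

theorem exists_monic_mem_eq_map_comap_C_sup_span {N : Ideal R[X]} (hN : N.IsMaximal)
    (hP : (N.comap (C : R →+* R[X])).IsMaximal) :
    ∃ f : R[X], f.Monic ∧ f ∈ N ∧ N = (N.comap C).map C ⊔ Ideal.span {f} := by
  obtain ⟨f, hf, hNeq⟩ := exists_monic_span_sup_map_eq R N hP (map_comap_C_ne_of_isMaximal hN)
  exact ⟨f, hf, hNeq.ge (Ideal.mem_sup_right (Ideal.mem_span_singleton_self f)), hNeq⟩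

end Polynomial

theorem maximal_ideals_of_polynomial_ring_contracting_to_maximal
    {R : Type*} [CommRing R] (N : Ideal (Polynomial R)) (hN : N.IsMaximal) :
    -- (1) ↔ (2)
    ((N.comap (C : R →+* Polynomial R)).IsMaximal ↔
      ∃ M : Ideal R, M.IsMaximal ∧ M.map (C : R →+* Polynomial R) ≤ N) ∧
    -- (1) ↔ (3)
    ((N.comap (C : R →+* Polynomial R)).IsMaximal ↔ ∃ f ∈ N, Polynomial.Monic f) ∧
    -- moreover, if these conditions hold:
    ((N.comap (C : R →+* Polynomial R)).IsMaximal →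
      -- `N = M[X] + f·R[X]` for some monic `f ∈ N`, with `M = N ∩ R`
      (∃ f : Polynomial R, f.Monic ∧ f ∈ N ∧
        N = (N.comap (C : R →+* Polynomial R)).map (C : R →+* Polynomial R) ⊔
          Ideal.span {f}) ∧
      -- and any maximal `M` with `M[X] ⊆ N` equals `N ∩ R`
      (∀ M : Ideal R, M.IsMaximal → M.map (C : R →+* Polynomial R) ≤ N →
        M = N.comap (C : R →+* Polynomial R))) := by
  have eq_comap : ∀ M : Ideal R, M.IsMaximal → M.map C ≤ N → M = N.comap C :=
    fun M hM hle => hM.eq_of_le (Ideal.comap_ne_top _ hN.ne_top) (Ideal.map_le_iff_le_comap.1 hle)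
  refine ⟨⟨fun h => ⟨_, h, Ideal.map_comap_le⟩, fun ⟨M, hM, hle⟩ => eq_comap M hM hle ▸ hM⟩,
    ⟨fun h => ?_, fun ⟨f, hfN, hf⟩ => hf.isMaximal_comap_C hfN⟩,
    fun h => ⟨exists_monic_mem_eq_map_comap_C_sup_span hN h, eq_comap⟩⟩
  obtain ⟨f, hf, hfN, -⟩ := exists_monic_mem_eq_map_comap_C_sup_span hN h
  exact ⟨f, hfN, hf⟩
end
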